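/- arXiv:math/0604251 — 3 statements merged into one kernel-verified Lean document; each statement's English description precedes it below -/
import Mathlib

section
/- Let C be a coalgebra over a field K, S a simple left subcomodule of C, and E(S) ⊆ C an injective envelope of S in the category of left C-comodules. Regard the dual E(S)* = Hom_K(E(S), K) as a left C*-module (the dual of the right C*-module E(S)). Then S^⊥ = {α ∈ E(S)* : α restricted to S is zero} is the unique maximal C*-submodule of E(S)*, S^⊥ is superfluous (small) in E(S)*, and E(S)* is generated as a left C*-module by any single element f ∉ S^⊥. -/
open TensorProduct LinearMap

namespace CoFrob

universe u v w x y

variable (K : Type u) [Field K] (C : Type v) [AddCommGroup C] [Module K C] [Coalgebra K C]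

/-- The convolution product on the dual of a coalgebra:
`(f * g)(c) = ∑ f(c₁) g(c₂)`. -/
noncomputable def conv (f g : Module.Dual K C) : Module.Dual K C :=
  ((TensorProduct.lid K K).toLinearMap ∘ₗ TensorProduct.map f g) ∘ₗ Coalgebra.comul (R := K)

variable {K C}

theorem conv_add_left (f f' g : Module.Dual K C) :
    conv K C (f + f') g = conv K C f g + conv K C f' g := by
  simp only [conv, TensorProduct.map_add_left, LinearMap.add_comp, LinearMap.comp_add]

theorem conv_add_right (f g g' : Module.Dual K C) :
    conv K C f (g + g') = conv K C f g + conv K C f g' := by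
  simp only [conv, TensorProduct.map_add_right, LinearMap.add_comp, LinearMap.comp_add]

theorem conv_smul_left (k : K) (f g : Module.Dual K C) :
    conv K C (k • f) g = k • conv K C f g := by
  simp only [conv, TensorProduct.map_smul_left, LinearMap.smul_comp, LinearMap.comp_smul]

theorem conv_smul_right (k : K) (f g : Module.Dual K C) :
    conv K C f (k • g) = k • conv K C f g := by
  simp only [conv, TensorProduct.map_smul_right, LinearMap.smul_comp, LinearMap.comp_smul]

theorem conv_counit_left (f : Module.Dual K C) :
    conv K C (Coalgebra.counit (R := K)) f = f := by
  unfold conv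
  rw [← LinearMap.lTensor_comp_rTensor (f := Coalgebra.counit (R := K) (A := C)) (g := f)]
  simp only [LinearMap.comp_assoc]
  rw [Coalgebra.rTensor_counit_comp_comul]
  ext c
  simp

theorem conv_counit_right (f : Module.Dual K C) :
    conv K C f (Coalgebra.counit (R := K)) = f := by
  unfold conv
  rw [← LinearMap.rTensor_comp_lTensor (f := f) (g := Coalgebra.counit (R := K) (A := C))]
  simp only [LinearMap.comp_assoc]
  rw [Coalgebra.lTensor_counit_comp_comul]
  ext c
  simp

theorem conv_assoc (f g h : Module.Dual K C) :
    conv K C (conv K C f g) h = conv K C f (conv K C g h) := by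
  unfold conv
  rw [← LinearMap.map_comp_rTensor, ← LinearMap.map_comp_lTensor]
  have key : (TensorProduct.lid K K).toLinearMap ∘ₗ
        TensorProduct.map ((TensorProduct.lid K K).toLinearMap ∘ₗ TensorProduct.map f g) h =
      ((TensorProduct.lid K K).toLinearMap ∘ₗ
          TensorProduct.map f ((TensorProduct.lid K K).toLinearMap ∘ₗ TensorProduct.map g h)) ∘ₗ
        (TensorProduct.assoc K C C C).toLinearMap := by
    apply TensorProduct.ext_threefold
    intro a b c
    simp [mul_assoc]
  simp only [← LinearMap.comp_assoc]
  rw [key]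
  simp only [LinearMap.comp_assoc]
  rw [Coalgebra.coassoc]


variable (K C)

/-- A right `C`-comodule structure on the `K`-vector space `M`. -/
structure RightComodStr (M : Type w) [AddCommGroup M] [Module K M] where
  ρ : M →ₗ[K] M ⊗[K] C
  coassoc : (TensorProduct.assoc K M C C).toLinearMap ∘ₗ ρ.rTensor C ∘ₗ ρ
      = (Coalgebra.comul (R := K)).lTensor M ∘ₗ ρ
  counit' : (TensorProduct.rid K M).toLinearMap ∘ₗ (Coalgebra.counit (R := K)).lTensor M ∘ₗ ρ
      = LinearMap.id

/-- A left `C`-comodule structure on the `K`-vector space `M`. -/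
structure LeftComodStr (M : Type w) [AddCommGroup M] [Module K M] where
  ρ : M →ₗ[K] C ⊗[K] M
  coassoc : (TensorProduct.assoc K C C M).toLinearMap ∘ₗ (Coalgebra.comul (R := K)).rTensor M ∘ₗ ρ
      = ρ.lTensor C ∘ₗ ρ
  counit' : (TensorProduct.lid K M).toLinearMap ∘ₗ (Coalgebra.counit (R := K)).rTensor M ∘ₗ ρ
      = LinearMap.id

variable {K C}
variable {M : Type w} [AddCommGroup M] [Module K M]

/-- The left action of the dual algebra `C*` on a right `C`-comodule:
`f • m = ∑ f(m₁) m₀`. -/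
noncomputable def RightComodStr.smul (ρ : RightComodStr K C M) (f : Module.Dual K C) :
    M →ₗ[K] M :=
  (TensorProduct.rid K M).toLinearMap ∘ₗ f.lTensor M ∘ₗ ρ.ρ

/-- The right action of the dual algebra `C*` on a left `C`-comodule:
`m • f = ∑ f(m₋₁) m₀`. -/
noncomputable def LeftComodStr.smul (ρ : LeftComodStr K C M) (f : Module.Dual K C) :
    M →ₗ[K] M :=
  (TensorProduct.lid K M).toLinearMap ∘ₗ f.rTensor M ∘ₗ ρ.ρ

theorem RightComodStr.smul_counit (ρ : RightComodStr K C M) :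
    ρ.smul (Coalgebra.counit (R := K)) = LinearMap.id :=
  ρ.counit'

theorem LeftComodStr.smul_counit (ρ : LeftComodStr K C M) :
    ρ.smul (Coalgebra.counit (R := K)) = LinearMap.id :=
  ρ.counit'

theorem RightComodStr.smul_add (ρ : RightComodStr K C M) (f g : Module.Dual K C) :
    ρ.smul (f + g) = ρ.smul f + ρ.smul g := by
  simp only [RightComodStr.smul, LinearMap.lTensor_add, LinearMap.add_comp, LinearMap.comp_add]

theorem LeftComodStr.smul_add (ρ : LeftComodStr K C M) (f g : Module.Dual K C) :
    ρ.smul (f + g) = ρ.smul f + ρ.smul g := by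
  simp only [LeftComodStr.smul, LinearMap.rTensor_add, LinearMap.add_comp, LinearMap.comp_add]

theorem RightComodStr.smul_smulK (ρ : RightComodStr K C M) (k : K) (f : Module.Dual K C) :
    ρ.smul (k • f) = k • ρ.smul f := by
  simp only [RightComodStr.smul, LinearMap.lTensor_smul, LinearMap.smul_comp, LinearMap.comp_smul]

theorem LeftComodStr.smul_smulK (ρ : LeftComodStr K C M) (k : K) (f : Module.Dual K C) :
    ρ.smul (k • f) = k • ρ.smul f := by
  simp only [LeftComodStr.smul, LinearMap.rTensor_smul, LinearMap.smul_comp, LinearMap.comp_smul]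

theorem RightComodStr.smul_conv (ρ : RightComodStr K C M) (f g : Module.Dual K C) :
    ρ.smul (conv K C f g) = ρ.smul f ∘ₗ ρ.smul g := by
  set X : C ⊗[K] C →ₗ[K] K :=
    (TensorProduct.lid K K).toLinearMap ∘ₗ TensorProduct.map f g with hX
  have key : (TensorProduct.rid K M).toLinearMap ∘ₗ X.lTensor M ∘ₗ
        (TensorProduct.assoc K M C C).toLinearMap =
      ((TensorProduct.rid K M).toLinearMap ∘ₗ f.lTensor M) ∘ₗ
        ((TensorProduct.rid K (M ⊗[K] C)).toLinearMap ∘ₗ g.lTensor (M ⊗[K] C)) := by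
    apply TensorProduct.ext_threefold
    intro m c c'
    simp [hX, smul_smul, mul_comm]
  have nat : ((TensorProduct.rid K (M ⊗[K] C)).toLinearMap ∘ₗ g.lTensor (M ⊗[K] C)) ∘ₗ
        ρ.ρ.rTensor C = ρ.ρ ∘ₗ (TensorProduct.rid K M).toLinearMap ∘ₗ g.lTensor M := by
    apply TensorProduct.ext'
    intro m c
    simp
  apply LinearMap.ext
  intro x
  have e1 : ρ.smul (conv K C f g) x
      = (TensorProduct.rid K M) (X.lTensor M
          ((Coalgebra.comul (R := K)).lTensor M (ρ.ρ x))) := by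
    simp only [RightComodStr.smul, LinearMap.comp_apply]
    rw [show conv K C f g = X ∘ₗ Coalgebra.comul (R := K) from rfl, LinearMap.lTensor_comp,
      LinearMap.comp_apply]
    rfl
  have e2 : (Coalgebra.comul (R := K)).lTensor M (ρ.ρ x)
      = (TensorProduct.assoc K M C C) ((ρ.ρ.rTensor C) (ρ.ρ x)) := by
    have h := LinearMap.congr_fun ρ.coassoc x
    simpa [LinearMap.comp_apply] using h.symm
  have e3 := LinearMap.congr_fun key ((ρ.ρ.rTensor C) (ρ.ρ x))
  have e4 := LinearMap.congr_fun nat (ρ.ρ x)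
  simp only [LinearMap.comp_apply, LinearEquiv.coe_coe] at e3 e4
  rw [e1, e2]
  rw [e3, e4]
  simp only [RightComodStr.smul, LinearMap.comp_apply, LinearEquiv.coe_coe]

theorem LeftComodStr.smul_conv (ρ : LeftComodStr K C M) (f g : Module.Dual K C) :
    ρ.smul (conv K C f g) = ρ.smul g ∘ₗ ρ.smul f := by
  set X : C ⊗[K] C →ₗ[K] K :=
    (TensorProduct.lid K K).toLinearMap ∘ₗ TensorProduct.map f g with hX
  have key : (TensorProduct.lid K M).toLinearMap ∘ₗ X.rTensor M =
      (((TensorProduct.lid K M).toLinearMap ∘ₗ g.rTensor M) ∘ₗ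
        ((TensorProduct.lid K (C ⊗[K] M)).toLinearMap ∘ₗ f.rTensor (C ⊗[K] M))) ∘ₗ
        (TensorProduct.assoc K C C M).toLinearMap := by
    apply TensorProduct.ext_threefold
    intro c c' m
    simp [hX, smul_smul, mul_comm]
  have nat : ((TensorProduct.lid K (C ⊗[K] M)).toLinearMap ∘ₗ f.rTensor (C ⊗[K] M)) ∘ₗ
        ρ.ρ.lTensor C = ρ.ρ ∘ₗ (TensorProduct.lid K M).toLinearMap ∘ₗ f.rTensor M := by
    apply TensorProduct.ext'
    intro c m
    simp
  apply LinearMap.ext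
  intro x
  have e1 : ρ.smul (conv K C f g) x
      = (TensorProduct.lid K M) (X.rTensor M
          ((Coalgebra.comul (R := K)).rTensor M (ρ.ρ x))) := by
    simp only [LeftComodStr.smul, LinearMap.comp_apply]
    rw [show conv K C f g = X ∘ₗ Coalgebra.comul (R := K) from rfl, LinearMap.rTensor_comp,
      LinearMap.comp_apply]
    rfl
  have e2 : (TensorProduct.assoc K C C M) ((Coalgebra.comul (R := K)).rTensor M (ρ.ρ x))
      = (ρ.ρ.lTensor C) (ρ.ρ x) := by
    have h := LinearMap.congr_fun ρ.coassoc x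
    simpa [LinearMap.comp_apply] using h
  have e3 := LinearMap.congr_fun key ((Coalgebra.comul (R := K)).rTensor M (ρ.ρ x))
  have e4 := LinearMap.congr_fun nat (ρ.ρ x)
  simp only [LinearMap.comp_apply, LinearEquiv.coe_coe] at e3 e4
  rw [e1, e3, e2, e4]
  simp only [LeftComodStr.smul, LinearMap.comp_apply, LinearEquiv.coe_coe]


/-! ### Morphisms of comodules, injective and projective comodules -/

/-- A morphism of right `C`-comodules. -/
def IsRightComodHom {M : Type w} [AddCommGroup M] [Module K M]
    {N : Type x} [AddCommGroup N] [Module K N]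
    (ρM : RightComodStr K C M) (ρN : RightComodStr K C N)
    (φ : M →ₗ[K] N) : Prop :=
  ρN.ρ ∘ₗ φ = φ.rTensor C ∘ₗ ρM.ρ

/-- A morphism of left `C`-comodules. -/
def IsLeftComodHom {M : Type w} [AddCommGroup M] [Module K M]
    {N : Type x} [AddCommGroup N] [Module K N]
    (ρM : LeftComodStr K C M) (ρN : LeftComodStr K C N)
    (φ : M →ₗ[K] N) : Prop :=
  ρN.ρ ∘ₗ φ = φ.lTensor C ∘ₗ ρM.ρ

/-- An injective object in the category of right `C`-comodules. -/
def RightComodStr.Injective {Q : Type w} [AddCommGroup Q] [Module K Q]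
    (ρQ : RightComodStr K C Q) : Prop :=
  ∀ (A B : Type x) [AddCommGroup A] [Module K A] [AddCommGroup B] [Module K B],
    ∀ (ρA : RightComodStr K C A) (ρB : RightComodStr K C B) (i : A →ₗ[K] B),
    Function.Injective i → IsRightComodHom ρA ρB i →
    ∀ φ : A →ₗ[K] Q, IsRightComodHom ρA ρQ φ →
    ∃ ψ : B →ₗ[K] Q, IsRightComodHom ρB ρQ ψ ∧ ψ ∘ₗ i = φ

/-- A projective object in the category of right `C`-comodules. -/
def RightComodStr.Projective {Q : Type w} [AddCommGroup Q] [Module K Q]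
    (ρQ : RightComodStr K C Q) : Prop :=
  ∀ (A B : Type x) [AddCommGroup A] [Module K A] [AddCommGroup B] [Module K B],
    ∀ (ρA : RightComodStr K C A) (ρB : RightComodStr K C B) (p : A →ₗ[K] B),
    Function.Surjective p → IsRightComodHom ρA ρB p →
    ∀ φ : Q →ₗ[K] B, IsRightComodHom ρQ ρB φ →
    ∃ ψ : Q →ₗ[K] A, IsRightComodHom ρQ ρA ψ ∧ p ∘ₗ ψ = φ

/-- An injective object in the category of left `C`-comodules. -/
def LeftComodStr.Injective {Q : Type w} [AddCommGroup Q] [Module K Q]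
    (ρQ : LeftComodStr K C Q) : Prop :=
  ∀ (A B : Type x) [AddCommGroup A] [Module K A] [AddCommGroup B] [Module K B],
    ∀ (ρA : LeftComodStr K C A) (ρB : LeftComodStr K C B) (i : A →ₗ[K] B),
    Function.Injective i → IsLeftComodHom ρA ρB i →
    ∀ φ : A →ₗ[K] Q, IsLeftComodHom ρA ρQ φ →
    ∃ ψ : B →ₗ[K] Q, IsLeftComodHom ρB ρQ ψ ∧ ψ ∘ₗ i = φ

/-- A projective object in the category of left `C`-comodules. -/
def LeftComodStr.Projective {Q : Type w} [AddCommGroup Q] [Module K Q]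
    (ρQ : LeftComodStr K C Q) : Prop :=
  ∀ (A B : Type x) [AddCommGroup A] [Module K A] [AddCommGroup B] [Module K B],
    ∀ (ρA : LeftComodStr K C A) (ρB : LeftComodStr K C B) (p : A →ₗ[K] B),
    Function.Surjective p → IsLeftComodHom ρA ρB p →
    ∀ φ : Q →ₗ[K] B, IsLeftComodHom ρQ ρB φ →
    ∃ ψ : Q →ₗ[K] A, IsLeftComodHom ρQ ρA ψ ∧ p ∘ₗ ψ = φ

/-! ### Subcomodules -/

/-- A `K`-subspace `s` of a right `C`-comodule `M` is a subcomodule if the coaction maps `s`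
into `s ⊗ C ⊆ M ⊗ C`. -/
def RightComodStr.IsSubcomod (ρ : RightComodStr K C M) (s : Submodule K M) : Prop :=
  ∀ x ∈ s, ρ.ρ x ∈ LinearMap.range (s.subtype.rTensor C)

/-- A `K`-subspace `s` of a left `C`-comodule `M` is a subcomodule if the coaction maps `s`
into `C ⊗ s ⊆ C ⊗ M`. -/
def LeftComodStr.IsSubcomod (ρ : LeftComodStr K C M) (s : Submodule K M) : Prop :=
  ∀ x ∈ s, ρ.ρ x ∈ LinearMap.range (s.subtype.lTensor C)

theorem RightComodStr.IsSubcomod.smul_mem {ρ : RightComodStr K C M} {s : Submodule K M}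
    (h : ρ.IsSubcomod s) (f : Module.Dual K C) {x : M} (hx : x ∈ s) : ρ.smul f x ∈ s := by
  obtain ⟨u, hu⟩ := h x hx
  have h1 : ρ.smul f x = (TensorProduct.rid K M) ((f.lTensor M) ((s.subtype.rTensor C) u)) := by
    simp only [RightComodStr.smul, LinearMap.comp_apply, hu]
    rfl
  have h2 : (f.lTensor M) ((s.subtype.rTensor C) u) = (s.subtype.rTensor K) ((f.lTensor ↥s) u) := by
    rw [← LinearMap.comp_apply, ← LinearMap.comp_apply, LinearMap.lTensor_comp_rTensor,
      LinearMap.rTensor_comp_lTensor]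
  have hnat : (TensorProduct.rid K M).toLinearMap ∘ₗ s.subtype.rTensor K
      = s.subtype ∘ₗ (TensorProduct.rid K ↥s).toLinearMap := by
    apply TensorProduct.ext'
    intro y k
    simp
  have h3 := LinearMap.congr_fun hnat ((f.lTensor ↥s) u)
  simp only [LinearMap.comp_apply, LinearEquiv.coe_coe] at h3
  rw [h1, h2, h3]
  exact Submodule.coe_mem _

theorem LeftComodStr.IsSubcomod.smul_mem {ρ : LeftComodStr K C M} {s : Submodule K M}
    (h : ρ.IsSubcomod s) (f : Module.Dual K C) {x : M} (hx : x ∈ s) : ρ.smul f x ∈ s := by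
  obtain ⟨u, hu⟩ := h x hx
  have h1 : ρ.smul f x = (TensorProduct.lid K M) ((f.rTensor M) ((s.subtype.lTensor C) u)) := by
    simp only [LeftComodStr.smul, LinearMap.comp_apply, hu]
    rfl
  have h2 : (f.rTensor M) ((s.subtype.lTensor C) u) = (s.subtype.lTensor K) ((f.rTensor ↥s) u) := by
    rw [← LinearMap.comp_apply, ← LinearMap.comp_apply, LinearMap.rTensor_comp_lTensor,
      LinearMap.lTensor_comp_rTensor]
  have hnat : (TensorProduct.lid K M).toLinearMap ∘ₗ s.subtype.lTensor K
      = s.subtype ∘ₗ (TensorProduct.lid K ↥s).toLinearMap := by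
    apply TensorProduct.ext'
    intro k y
    simp
  have h3 := LinearMap.congr_fun hnat ((f.rTensor ↥s) u)
  simp only [LinearMap.comp_apply, LinearEquiv.coe_coe] at h3
  rw [h1, h2, h3]
  exact Submodule.coe_mem _

/-- The action of `C*` on a subcomodule of a right comodule, by restriction. -/
noncomputable def RightComodStr.subSmul (ρ : RightComodStr K C M) {s : Submodule K M}
    (h : ρ.IsSubcomod s) (f : Module.Dual K C) : ↥s →ₗ[K] ↥s :=
  (ρ.smul f).restrict fun x hx => h.smul_mem f hx

/-- The action of `C*` on a subcomodule of a left comodule, by restriction. -/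
noncomputable def LeftComodStr.subSmul (ρ : LeftComodStr K C M) {s : Submodule K M}
    (h : ρ.IsSubcomod s) (f : Module.Dual K C) : ↥s →ₗ[K] ↥s :=
  (ρ.smul f).restrict fun x hx => h.smul_mem f hx

/-! ### Simple comodules, essential extensions, injective envelopes -/

/-- A simple right `C`-comodule: nonzero, with no nontrivial subcomodules. -/
def RightComodStr.IsSimple (ρ : RightComodStr K C M) : Prop :=
  (⊥ : Submodule K M) ≠ ⊤ ∧ ∀ s : Submodule K M, ρ.IsSubcomod s → s = ⊥ ∨ s = ⊤

/-- A simple left `C`-comodule: nonzero, with no nontrivial subcomodules. -/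
def LeftComodStr.IsSimple (ρ : LeftComodStr K C M) : Prop :=
  (⊥ : Submodule K M) ≠ ⊤ ∧ ∀ s : Submodule K M, ρ.IsSubcomod s → s = ⊥ ∨ s = ⊤

/-- A subcomodule which is a simple comodule. -/
def RightComodStr.IsSimpleSubcomod (ρ : RightComodStr K C M) (S : Submodule K M) : Prop :=
  ρ.IsSubcomod S ∧ S ≠ ⊥ ∧ ∀ t : Submodule K M, ρ.IsSubcomod t → t ≤ S → t = ⊥ ∨ t = S

/-- A subcomodule which is a simple comodule. -/
def LeftComodStr.IsSimpleSubcomod (ρ : LeftComodStr K C M) (S : Submodule K M) : Prop :=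
  ρ.IsSubcomod S ∧ S ≠ ⊥ ∧ ∀ t : Submodule K M, ρ.IsSubcomod t → t ≤ S → t = ⊥ ∨ t = S

/-- A subcomodule `E` of a right comodule `M` which is injective as a comodule in its own
right; this is expressed via the extension property for morphisms with values in `E`. -/
def RightComodStr.IsInjectiveSubcomod (ρ : RightComodStr K C M) (E : Submodule K M) : Prop :=
  ρ.IsSubcomod E ∧
  ∀ (A B : Type x) [AddCommGroup A] [Module K A] [AddCommGroup B] [Module K B],
    ∀ (ρA : RightComodStr K C A) (ρB : RightComodStr K C B) (i : A →ₗ[K] B),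
    Function.Injective i → IsRightComodHom ρA ρB i →
    ∀ φ : A →ₗ[K] M, IsRightComodHom ρA ρ φ → LinearMap.range φ ≤ E →
    ∃ ψ : B →ₗ[K] M, IsRightComodHom ρB ρ ψ ∧ LinearMap.range ψ ≤ E ∧ ψ ∘ₗ i = φ

/-- A subcomodule `E` of a left comodule `M` which is injective as a comodule. -/
def LeftComodStr.IsInjectiveSubcomod (ρ : LeftComodStr K C M) (E : Submodule K M) : Prop :=
  ρ.IsSubcomod E ∧
  ∀ (A B : Type x) [AddCommGroup A] [Module K A] [AddCommGroup B] [Module K B],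
    ∀ (ρA : LeftComodStr K C A) (ρB : LeftComodStr K C B) (i : A →ₗ[K] B),
    Function.Injective i → IsLeftComodHom ρA ρB i →
    ∀ φ : A →ₗ[K] M, IsLeftComodHom ρA ρ φ → LinearMap.range φ ≤ E →
    ∃ ψ : B →ₗ[K] M, IsLeftComodHom ρB ρ ψ ∧ LinearMap.range ψ ≤ E ∧ ψ ∘ₗ i = φ

/-- `E` is an injective envelope, inside the comodule `M`, of the subcomodule `S`:
`E` is an injective subcomodule containing `S` as an essential subcomodule. -/
def RightComodStr.IsInjEnvSubcomod (ρ : RightComodStr K C M) (S E : Submodule K M) : Prop :=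
  S ≤ E ∧ RightComodStr.IsInjectiveSubcomod.{u, v, w, x} ρ E ∧
    ∀ t : Submodule K M, ρ.IsSubcomod t → t ≤ E → t ≠ ⊥ → S ⊓ t ≠ ⊥

/-- `E` is an injective envelope, inside the comodule `M`, of the subcomodule `S`. -/
def LeftComodStr.IsInjEnvSubcomod (ρ : LeftComodStr K C M) (S E : Submodule K M) : Prop :=
  S ≤ E ∧ LeftComodStr.IsInjectiveSubcomod.{u, v, w, x} ρ E ∧
    ∀ t : Submodule K M, ρ.IsSubcomod t → t ≤ E → t ≠ ⊥ → S ⊓ t ≠ ⊥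

/-- `ι : T → E` realizes the (abstract) right comodule `E` as an injective envelope of the
right comodule `T`: `ι` is an injective morphism of comodules, `E` is injective, and the
image of `ι` is essential in `E`. -/
def IsRightInjEnv {T : Type w} [AddCommGroup T] [Module K T]
    {E : Type x} [AddCommGroup E] [Module K E]
    (ρT : RightComodStr K C T) (ρE : RightComodStr K C E) (ι : T →ₗ[K] E) : Prop :=
  IsRightComodHom ρT ρE ι ∧ Function.Injective ι ∧ RightComodStr.Injective.{u, v, x, y} ρE ∧
    ∀ t : Submodule K E, ρE.IsSubcomod t → t ≠ ⊥ → t ⊓ LinearMap.range ι ≠ ⊥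

/-- `ι : T → E` realizes the left comodule `E` as an injective envelope of `T`. -/
def IsLeftInjEnv {T : Type w} [AddCommGroup T] [Module K T]
    {E : Type x} [AddCommGroup E] [Module K E]
    (ρT : LeftComodStr K C T) (ρE : LeftComodStr K C E) (ι : T →ₗ[K] E) : Prop :=
  IsLeftComodHom ρT ρE ι ∧ Function.Injective ι ∧ LeftComodStr.Injective.{u, v, x, y} ρE ∧
    ∀ t : Submodule K E, ρE.IsSubcomod t → t ≠ ⊥ → t ⊓ LinearMap.range ι ≠ ⊥

/-- An indecomposable right comodule: nonzero and not the direct sum of two nonzero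
subcomodules. -/
def RightComodStr.Indecomposable (ρ : RightComodStr K C M) : Prop :=
  (⊥ : Submodule K M) ≠ ⊤ ∧
    ¬∃ s t : Submodule K M, ρ.IsSubcomod s ∧ ρ.IsSubcomod t ∧
      s ⊓ t = ⊥ ∧ s ⊔ t = ⊤ ∧ s ≠ ⊥ ∧ t ≠ ⊥

/-! ### The regular comodule structures on `C` -/

variable (K C)

/-- `C` as a right comodule over itself, via the comultiplication. -/
noncomputable def Cright : RightComodStr K C C where
  ρ := Coalgebra.comul (R := K)
  coassoc := Coalgebra.coassoc
  counit' := by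
    rw [Coalgebra.lTensor_counit_comp_comul]
    apply LinearMap.ext
    intro c
    simp

/-- `C` as a left comodule over itself, via the comultiplication. -/
noncomputable def Cleft : LeftComodStr K C C where
  ρ := Coalgebra.comul (R := K)
  coassoc := Coalgebra.coassoc
  counit' := by
    rw [Coalgebra.rTensor_counit_comp_comul]
    apply LinearMap.ext
    intro c
    simp

variable {K C}

/-! ### Modules over the dual algebra `C*` -/

variable (K C)

/-- A left module structure over the convolution algebra `C*` on the `K`-vector space `N`
(with compatible `K`-structure). -/
structure LeftModStr (N : Type w) [AddCommGroup N] [Module K N] where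
  act : Module.Dual K C → N →ₗ[K] N
  act_add : ∀ f g, act (f + g) = act f + act g
  act_smulK : ∀ (k : K) f, act (k • f) = k • act f
  act_conv : ∀ f g, act (conv K C f g) = act f ∘ₗ act g
  act_counit : act (Coalgebra.counit (R := K)) = LinearMap.id

/-- A right module structure over the convolution algebra `C*` on the `K`-vector space `N`
(with compatible `K`-structure); `act f n` denotes `n · f`. -/
structure RightModStr (N : Type w) [AddCommGroup N] [Module K N] where
  act : Module.Dual K C → N →ₗ[K] N
  act_add : ∀ f g, act (f + g) = act f + act g
  act_smulK : ∀ (k : K) f, act (k • f) = k • act f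
  act_conv : ∀ f g, act (conv K C f g) = act g ∘ₗ act f
  act_counit : act (Coalgebra.counit (R := K)) = LinearMap.id

variable {K C}

/-- A morphism of left `C*`-modules. -/
def IsLeftModHom {N : Type w} [AddCommGroup N] [Module K N]
    {N' : Type x} [AddCommGroup N'] [Module K N']
    (S : LeftModStr K C N) (S' : LeftModStr K C N') (φ : N →ₗ[K] N') : Prop :=
  ∀ f, φ ∘ₗ S.act f = S'.act f ∘ₗ φ

/-- A morphism of right `C*`-modules. -/
def IsRightModHom {N : Type w} [AddCommGroup N] [Module K N]
    {N' : Type x} [AddCommGroup N'] [Module K N']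
    (S : RightModStr K C N) (S' : RightModStr K C N') (φ : N →ₗ[K] N') : Prop :=
  ∀ f, φ ∘ₗ S.act f = S'.act f ∘ₗ φ

/-- An injective left `C*`-module. -/
def LeftModStr.Injective {Q : Type w} [AddCommGroup Q] [Module K Q]
    (SQ : LeftModStr K C Q) : Prop :=
  ∀ (A B : Type x) [AddCommGroup A] [Module K A] [AddCommGroup B] [Module K B],
    ∀ (SA : LeftModStr K C A) (SB : LeftModStr K C B) (i : A →ₗ[K] B),
    Function.Injective i → IsLeftModHom SA SB i →
    ∀ φ : A →ₗ[K] Q, IsLeftModHom SA SQ φ →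
    ∃ ψ : B →ₗ[K] Q, IsLeftModHom SB SQ ψ ∧ ψ ∘ₗ i = φ

/-- A projective left `C*`-module. -/
def LeftModStr.Projective {Q : Type w} [AddCommGroup Q] [Module K Q]
    (SQ : LeftModStr K C Q) : Prop :=
  ∀ (A B : Type x) [AddCommGroup A] [Module K A] [AddCommGroup B] [Module K B],
    ∀ (SA : LeftModStr K C A) (SB : LeftModStr K C B) (p : A →ₗ[K] B),
    Function.Surjective p → IsLeftModHom SA SB p →
    ∀ φ : Q →ₗ[K] B, IsLeftModHom SQ SB φ →
    ∃ ψ : Q →ₗ[K] A, IsLeftModHom SQ SA ψ ∧ p ∘ₗ ψ = φ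

/-- A submodule stable under the `C*`-action, i.e. a `C*`-submodule. -/
def LeftModStr.IsStableSub {N : Type w} [AddCommGroup N] [Module K N]
    (S : LeftModStr K C N) (P : Submodule K N) : Prop :=
  ∀ f, ∀ n ∈ P, S.act f n ∈ P

/-- A submodule stable under the `C*`-action, i.e. a `C*`-submodule. -/
def RightModStr.IsStableSub {N : Type w} [AddCommGroup N] [Module K N]
    (S : RightModStr K C N) (P : Submodule K N) : Prop :=
  ∀ f, ∀ n ∈ P, S.act f n ∈ P

/-- An indecomposable left `C*`-module: nonzero, and not a direct sum of two nonzero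
`C*`-submodules. -/
def LeftModStr.Indecomposable {N : Type w} [AddCommGroup N] [Module K N]
    (S : LeftModStr K C N) : Prop :=
  (⊥ : Submodule K N) ≠ ⊤ ∧
    ¬∃ P Q : Submodule K N, S.IsStableSub P ∧ S.IsStableSub Q ∧
      P ⊓ Q = ⊥ ∧ P ⊔ Q = ⊤ ∧ P ≠ ⊥ ∧ Q ≠ ⊥

/-- The left `C*`-module structure induced on a right `C`-comodule. -/
noncomputable def RightComodStr.toLeftModStr {M : Type w} [AddCommGroup M] [Module K M]
    (ρ : RightComodStr K C M) : LeftModStr K C M where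
  act := ρ.smul
  act_add := ρ.smul_add
  act_smulK := ρ.smul_smulK
  act_conv := ρ.smul_conv
  act_counit := ρ.smul_counit

/-- The right `C*`-module structure induced on a left `C`-comodule. -/
noncomputable def LeftComodStr.toRightModStr {M : Type w} [AddCommGroup M] [Module K M]
    (ρ : LeftComodStr K C M) : RightModStr K C M where
  act := ρ.smul
  act_add := ρ.smul_add
  act_smulK := ρ.smul_smulK
  act_conv := ρ.smul_conv
  act_counit := ρ.smul_counit

/-- The right `C*`-module structure on the dual of a right `C`-comodule:
`(α · f)(m) = α(f · m)`. -/
noncomputable def RightComodStr.dualModStr {M : Type w} [AddCommGroup M] [Module K M]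
    (ρ : RightComodStr K C M) : RightModStr K C (Module.Dual K M) where
  act f := (ρ.smul f).dualMap
  act_add f g := by
    apply LinearMap.ext; intro α; apply LinearMap.ext; intro m
    simp [ρ.smul_add]
  act_smulK k f := by
    apply LinearMap.ext; intro α; apply LinearMap.ext; intro m
    simp [ρ.smul_smulK]
  act_conv f g := by
    apply LinearMap.ext; intro α; apply LinearMap.ext; intro m
    simp [ρ.smul_conv]
  act_counit := by
    apply LinearMap.ext; intro α; apply LinearMap.ext; intro m
    simp [ρ.smul_counit]

/-- The left `C*`-module structure on the dual of a left `C`-comodule: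
`(f · α)(m) = α(m · f)`. -/
noncomputable def LeftComodStr.dualModStr {M : Type w} [AddCommGroup M] [Module K M]
    (ρ : LeftComodStr K C M) : LeftModStr K C (Module.Dual K M) where
  act f := (ρ.smul f).dualMap
  act_add f g := by
    apply LinearMap.ext; intro α; apply LinearMap.ext; intro m
    simp [ρ.smul_add]
  act_smulK k f := by
    apply LinearMap.ext; intro α; apply LinearMap.ext; intro m
    simp [ρ.smul_smulK]
  act_conv f g := by
    apply LinearMap.ext; intro α; apply LinearMap.ext; intro m
    simp [ρ.smul_conv]
  act_counit := by
    apply LinearMap.ext; intro α; apply LinearMap.ext; intro m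
    simp [ρ.smul_counit]

theorem RightComodStr.subSmul_apply_coe {M : Type w} [AddCommGroup M] [Module K M]
    (ρ : RightComodStr K C M) {s : Submodule K M} (h : ρ.IsSubcomod s)
    (f : Module.Dual K C) (x : ↥s) : (ρ.subSmul h f x : M) = ρ.smul f (x : M) :=
  rfl

theorem RightComodStr.subSmul_add {M : Type w} [AddCommGroup M] [Module K M]
    (ρ : RightComodStr K C M) {s : Submodule K M} (h : ρ.IsSubcomod s)
    (f g : Module.Dual K C) : ρ.subSmul h (f + g) = ρ.subSmul h f + ρ.subSmul h g := by
  apply LinearMap.ext; intro x; apply Subtype.ext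
  have hx := LinearMap.congr_fun (ρ.smul_add f g) (x : M)
  simpa [RightComodStr.subSmul] using hx

theorem RightComodStr.subSmul_smulK {M : Type w} [AddCommGroup M] [Module K M]
    (ρ : RightComodStr K C M) {s : Submodule K M} (h : ρ.IsSubcomod s)
    (k : K) (f : Module.Dual K C) : ρ.subSmul h (k • f) = k • ρ.subSmul h f := by
  apply LinearMap.ext; intro x; apply Subtype.ext
  have hx := LinearMap.congr_fun (ρ.smul_smulK k f) (x : M)
  simpa [RightComodStr.subSmul] using hx

theorem RightComodStr.subSmul_conv {M : Type w} [AddCommGroup M] [Module K M]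
    (ρ : RightComodStr K C M) {s : Submodule K M} (h : ρ.IsSubcomod s)
    (f g : Module.Dual K C) :
    ρ.subSmul h (conv K C f g) = ρ.subSmul h f ∘ₗ ρ.subSmul h g := by
  apply LinearMap.ext; intro x; apply Subtype.ext
  have hx := LinearMap.congr_fun (ρ.smul_conv f g) (x : M)
  simpa [RightComodStr.subSmul] using hx

theorem RightComodStr.subSmul_counit {M : Type w} [AddCommGroup M] [Module K M]
    (ρ : RightComodStr K C M) {s : Submodule K M} (h : ρ.IsSubcomod s) :
    ρ.subSmul h (Coalgebra.counit (R := K)) = LinearMap.id := by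
  apply LinearMap.ext; intro x; apply Subtype.ext
  have hx := LinearMap.congr_fun ρ.smul_counit (x : M)
  simpa [RightComodStr.subSmul] using hx

theorem LeftComodStr.subSmul_apply_coe {M : Type w} [AddCommGroup M] [Module K M]
    (ρ : LeftComodStr K C M) {s : Submodule K M} (h : ρ.IsSubcomod s)
    (f : Module.Dual K C) (x : ↥s) : (ρ.subSmul h f x : M) = ρ.smul f (x : M) :=
  rfl

theorem LeftComodStr.subSmul_add {M : Type w} [AddCommGroup M] [Module K M]
    (ρ : LeftComodStr K C M) {s : Submodule K M} (h : ρ.IsSubcomod s)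
    (f g : Module.Dual K C) : ρ.subSmul h (f + g) = ρ.subSmul h f + ρ.subSmul h g := by
  apply LinearMap.ext; intro x; apply Subtype.ext
  have hx := LinearMap.congr_fun (ρ.smul_add f g) (x : M)
  simpa [LeftComodStr.subSmul] using hx

theorem LeftComodStr.subSmul_smulK {M : Type w} [AddCommGroup M] [Module K M]
    (ρ : LeftComodStr K C M) {s : Submodule K M} (h : ρ.IsSubcomod s)
    (k : K) (f : Module.Dual K C) : ρ.subSmul h (k • f) = k • ρ.subSmul h f := by
  apply LinearMap.ext; intro x; apply Subtype.ext
  have hx := LinearMap.congr_fun (ρ.smul_smulK k f) (x : M)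
  simpa [LeftComodStr.subSmul] using hx

theorem LeftComodStr.subSmul_conv {M : Type w} [AddCommGroup M] [Module K M]
    (ρ : LeftComodStr K C M) {s : Submodule K M} (h : ρ.IsSubcomod s)
    (f g : Module.Dual K C) :
    ρ.subSmul h (conv K C f g) = ρ.subSmul h g ∘ₗ ρ.subSmul h f := by
  apply LinearMap.ext; intro x; apply Subtype.ext
  have hx := LinearMap.congr_fun (ρ.smul_conv f g) (x : M)
  simpa [LeftComodStr.subSmul] using hx

theorem LeftComodStr.subSmul_counit {M : Type w} [AddCommGroup M] [Module K M]
    (ρ : LeftComodStr K C M) {s : Submodule K M} (h : ρ.IsSubcomod s) :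
    ρ.subSmul h (Coalgebra.counit (R := K)) = LinearMap.id := by
  apply LinearMap.ext; intro x; apply Subtype.ext
  have hx := LinearMap.congr_fun ρ.smul_counit (x : M)
  simpa [LeftComodStr.subSmul] using hx

/-- The right `C*`-module structure on the dual of a right subcomodule of a right comodule:
`(α · f)(m) = α(f · m)`. -/
noncomputable def RightComodStr.subDualModStr {M : Type w} [AddCommGroup M] [Module K M]
    (ρ : RightComodStr K C M) {s : Submodule K M} (h : ρ.IsSubcomod s) :
    RightModStr K C (Module.Dual K ↥s) where
  act f := (ρ.subSmul h f).dualMap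
  act_add f g := by
    try dsimp only
    rw [ρ.subSmul_add h f g]
    apply LinearMap.ext; intro α; apply LinearMap.ext; intro m
    simp
  act_smulK k f := by
    try dsimp only
    rw [ρ.subSmul_smulK h k f]
    apply LinearMap.ext; intro α; apply LinearMap.ext; intro m
    simp
  act_conv f g := by
    try dsimp only
    rw [ρ.subSmul_conv h f g]
    apply LinearMap.ext; intro α; apply LinearMap.ext; intro m
    simp
  act_counit := by
    try dsimp only
    rw [ρ.subSmul_counit h]
    apply LinearMap.ext; intro α; apply LinearMap.ext; intro m
    simp

/-- The left `C*`-module structure on the dual of a left subcomodule of a left comodule: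
`(f · α)(m) = α(m · f)`. -/
noncomputable def LeftComodStr.subDualModStr {M : Type w} [AddCommGroup M] [Module K M]
    (ρ : LeftComodStr K C M) {s : Submodule K M} (h : ρ.IsSubcomod s) :
    LeftModStr K C (Module.Dual K ↥s) where
  act f := (ρ.subSmul h f).dualMap
  act_add f g := by
    try dsimp only
    rw [ρ.subSmul_add h f g]
    apply LinearMap.ext; intro α; apply LinearMap.ext; intro m
    simp
  act_smulK k f := by
    try dsimp only
    rw [ρ.subSmul_smulK h k f]
    apply LinearMap.ext; intro α; apply LinearMap.ext; intro m
    simp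
  act_conv f g := by
    try dsimp only
    rw [ρ.subSmul_conv h f g]
    apply LinearMap.ext; intro α; apply LinearMap.ext; intro m
    simp
  act_counit := by
    try dsimp only
    rw [ρ.subSmul_counit h]
    apply LinearMap.ext; intro α; apply LinearMap.ext; intro m
    simp

/-! ### The regular `C*`-module structures on `C*`, and rational modules -/

variable (K C)

/-- Left multiplication in the convolution algebra `C*`, as a linear map. -/
noncomputable def lmulDual (f : Module.Dual K C) : Module.Dual K C →ₗ[K] Module.Dual K C where
  toFun g := conv K C f g
  map_add' g g' := conv_add_right f g g'
  map_smul' k g := conv_smul_right k f g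

/-- Right multiplication in the convolution algebra `C*`, as a linear map. -/
noncomputable def rmulDual (f : Module.Dual K C) : Module.Dual K C →ₗ[K] Module.Dual K C where
  toFun g := conv K C g f
  map_add' g g' := conv_add_left g g' f
  map_smul' k g := conv_smul_left k g f

/-- `C*` as a left module over itself (by left convolution multiplication). -/
noncomputable def dualLeftReg : LeftModStr K C (Module.Dual K C) where
  act := lmulDual K C
  act_add f g := by
    apply LinearMap.ext; intro h
    simp [lmulDual, conv_add_left]
  act_smulK k f := by
    apply LinearMap.ext; intro h
    simp [lmulDual, conv_smul_left]
  act_conv f g := by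
    apply LinearMap.ext; intro h
    simp [lmulDual, conv_assoc]
  act_counit := by
    apply LinearMap.ext; intro h
    simp [lmulDual, conv_counit_left]

/-- `C*` as a right module over itself (by right convolution multiplication). -/
noncomputable def dualRightReg : RightModStr K C (Module.Dual K C) where
  act := rmulDual K C
  act_add f g := by
    apply LinearMap.ext; intro h
    simp [rmulDual, conv_add_right]
  act_smulK k f := by
    apply LinearMap.ext; intro h
    simp [rmulDual, conv_smul_right]
  act_conv f g := by
    apply LinearMap.ext; intro h
    simp [rmulDual, conv_assoc]
  act_counit := by
    apply LinearMap.ext; intro h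
    simp [rmulDual, conv_counit_right]

variable {K C}

/-- A rational submodule of a left `C*`-module: a stable subspace on which the action comes
from a right `C`-comodule structure. -/
def LeftModStr.IsRationalSub {N : Type w} [AddCommGroup N] [Module K N]
    (S : LeftModStr K C N) (P : Submodule K N) : Prop :=
  S.IsStableSub P ∧
    ∃ ρ : RightComodStr K C ↥P, ∀ (f : Module.Dual K C) (p : ↥P),
      (ρ.smul f p : N) = S.act f (p : N)

/-- A rational submodule of a right `C*`-module: a stable subspace on which the action comes
from a left `C`-comodule structure. -/
def RightModStr.IsRationalSub {N : Type w} [AddCommGroup N] [Module K N]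
    (S : RightModStr K C N) (P : Submodule K N) : Prop :=
  S.IsStableSub P ∧
    ∃ ρ : LeftComodStr K C ↥P, ∀ (f : Module.Dual K C) (p : ↥P),
      (ρ.smul f p : N) = S.act f (p : N)

/-- The rational part `Rat(N)` of a left `C*`-module `N`: the largest rational submodule,
i.e. the sum of all rational submodules. -/
def LeftModStr.rat {N : Type w} [AddCommGroup N] [Module K N]
    (S : LeftModStr K C N) : Submodule K N :=
  sSup {P | S.IsRationalSub P}

/-- The rational part `Rat(N)` of a right `C*`-module `N`: the largest rational submodule,
i.e. the sum of all rational submodules. -/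
def RightModStr.rat {N : Type w} [AddCommGroup N] [Module K N]
    (S : RightModStr K C N) : Submodule K N :=
  sSup {P | S.IsRationalSub P}

/-! ### Co-Frobenius coalgebras -/

variable (K C)

/-- `C` is a right co-Frobenius coalgebra: there is an injective morphism of right
`C*`-modules from `C` (with the action `c ↼ f = ∑ f(c₁) c₂`) into `C*`. -/
def IsRightCoFrobenius : Prop :=
  ∃ φ : C →ₗ[K] Module.Dual K C, Function.Injective φ ∧
    ∀ (f : Module.Dual K C) (c : C), φ ((Cleft K C).smul f c) = conv K C (φ c) f

/-- `C` is a left co-Frobenius coalgebra: there is an injective morphism of left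
`C*`-modules from `C` (with the action `f ⇀ c = ∑ f(c₂) c₁`) into `C*`. -/
def IsLeftCoFrobenius : Prop :=
  ∃ φ : C →ₗ[K] Module.Dual K C, Function.Injective φ ∧
    ∀ (f : Module.Dual K C) (c : C), φ ((Cright K C).smul f c) = conv K C f (φ c)

/-- `C` is co-Frobenius if it is both left and right co-Frobenius. -/
def IsCoFrobenius : Prop := IsLeftCoFrobenius K C ∧ IsRightCoFrobenius K C

/-- `C` is right semiperfect: every finite-dimensional right `C`-comodule has a projective
cover in the category of right `C`-comodules. -/
def IsRightSemiperfect : Prop :=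
  ∀ (M : Type x) [AddCommGroup M] [Module K M],
    ∀ (ρM : RightComodStr K C M), FiniteDimensional K M →
    ∃ (P : Type x) (_ : AddCommGroup P) (_ : Module K P),
    ∃ (ρP : RightComodStr K C P) (π : P →ₗ[K] M),
      RightComodStr.Projective.{u, v, x, y} ρP ∧ IsRightComodHom ρP ρM π ∧
      Function.Surjective π ∧
      ∀ s : Submodule K P, ρP.IsSubcomod s → s ⊔ LinearMap.ker π = ⊤ → s = ⊤

/-- `C` is left semiperfect: every finite-dimensional left `C`-comodule has a projective
cover in the category of left `C`-comodules. -/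
def IsLeftSemiperfect : Prop :=
  ∀ (M : Type x) [AddCommGroup M] [Module K M],
    ∀ (ρM : LeftComodStr K C M), FiniteDimensional K M →
    ∃ (P : Type x) (_ : AddCommGroup P) (_ : Module K P),
    ∃ (ρP : LeftComodStr K C P) (π : P →ₗ[K] M),
      LeftComodStr.Projective.{u, v, x, y} ρP ∧ IsLeftComodHom ρP ρM π ∧
      Function.Surjective π ∧
      ∀ s : Submodule K P, ρP.IsSubcomod s → s ⊔ LinearMap.ker π = ⊤ → s = ⊤

variable {K C}

/-! ### Products of `C*`-modules -/

/-- The product of a family of left `C*`-modules. -/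
noncomputable def piLeftModStr {ι : Type y} {N : ι → Type x} [∀ i, AddCommGroup (N i)]
    [∀ i, Module K (N i)] (S : ∀ i, LeftModStr K C (N i)) : LeftModStr K C (∀ i, N i) where
  act f := LinearMap.pi fun i => (S i).act f ∘ₗ LinearMap.proj i
  act_add f g := by
    apply LinearMap.ext; intro n; funext i
    simp [(S i).act_add]
  act_smulK k f := by
    apply LinearMap.ext; intro n; funext i
    simp [(S i).act_smulK]
  act_conv f g := by
    apply LinearMap.ext; intro n; funext i
    simp [(S i).act_conv]
  act_counit := by
    apply LinearMap.ext; intro n; funext i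
    simp [(S i).act_counit]

/-- The product of a family of right `C*`-modules. -/
noncomputable def piRightModStr {ι : Type y} {N : ι → Type x} [∀ i, AddCommGroup (N i)]
    [∀ i, Module K (N i)] (S : ∀ i, RightModStr K C (N i)) : RightModStr K C (∀ i, N i) where
  act f := LinearMap.pi fun i => (S i).act f ∘ₗ LinearMap.proj i
  act_add f g := by
    apply LinearMap.ext; intro n; funext i
    simp [(S i).act_add]
  act_smulK k f := by
    apply LinearMap.ext; intro n; funext i
    simp [(S i).act_smulK]
  act_conv f g := by
    apply LinearMap.ext; intro n; funext i
    simp [(S i).act_conv]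
  act_counit := by
    apply LinearMap.ext; intro n; funext i
    simp [(S i).act_counit]

/-- The submodule of finitely supported families inside a product: this is the direct sum
`⊕ᵢ Nᵢ` inside `∏ᵢ Nᵢ`. -/
def finSupportSub {ι : Type y} (N : ι → Type x) [∀ i, AddCommGroup (N i)]
    [∀ i, Module K (N i)] : Submodule K (∀ i, N i) where
  carrier := {x | {i | x i ≠ 0}.Finite}
  add_mem' := by
    intro a b ha hb
    refine (Set.Finite.union ha hb).subset ?_
    intro i hi
    simp only [Set.mem_setOf_eq, Set.mem_union, Pi.add_apply] at *
    by_contra hcon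
    push_neg at hcon
    exact hi (by rw [hcon.1, hcon.2, add_zero])
  zero_mem' := by
    simp only [Set.mem_setOf_eq, Pi.zero_apply, ne_eq, not_true_eq_false]
    simpa using Set.finite_empty
  smul_mem' := by
    intro c a ha
    refine ha.subset ?_
    intro i hi
    simp only [Set.mem_setOf_eq, Pi.smul_apply] at *
    intro hzero
    exact hi (by rw [hzero, smul_zero])

/-- The space `Hom_{C*}(M, C*)` of left `C*`-module morphisms from a right `C`-comodule `M`
to `C*` (with left regular action), as a `K`-subspace of `Hom_K(M, C*)`. -/
def cstarHomSub {M : Type w} [AddCommGroup M] [Module K M]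
    (ρM : RightComodStr K C M) : Submodule K (M →ₗ[K] Module.Dual K C) where
  carrier := {φ | ∀ f : Module.Dual K C, φ ∘ₗ ρM.smul f = lmulDual K C f ∘ₗ φ}
  add_mem' := by
    intro a b ha hb f
    simp only [LinearMap.add_comp, LinearMap.comp_add, ha f, hb f]
  zero_mem' := by
    intro f
    simp only [LinearMap.zero_comp, LinearMap.comp_zero]
  smul_mem' := by
    intro k a ha f
    simp only [LinearMap.smul_comp, LinearMap.comp_smul, ha f]

/-- The space `Hom^C(T, ⊕ᵢ Xᵢ)` of right `C`-comodule morphisms from `T` into the direct sum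
of the family `Xᵢ`, realized as the subspace of those linear maps `T → ∏ᵢ Xᵢ` that take
values in the direct sum and whose components are comodule morphisms. -/
def homIntoSumSub {ι : Type y} {X : ι → Type x} [∀ i, AddCommGroup (X i)]
    [∀ i, Module K (X i)] (ρX : ∀ i, RightComodStr K C (X i))
    {T : Type w} [AddCommGroup T] [Module K T] (ρT : RightComodStr K C T) :
    Submodule K (T →ₗ[K] ∀ i, X i) where
  carrier := {φ | (∀ t, φ t ∈ finSupportSub (K := K) X) ∧
    ∀ i, IsRightComodHom ρT (ρX i) (LinearMap.proj i ∘ₗ φ)}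
  add_mem' := by
    intro a b ha hb
    refine ⟨fun t => by simpa using add_mem (ha.1 t) (hb.1 t), fun i => ?_⟩
    have h1 : LinearMap.proj (R := K) (φ := X) i ∘ₗ (a + b)
        = LinearMap.proj i ∘ₗ a + LinearMap.proj i ∘ₗ b := by
      simp [LinearMap.comp_add]
    unfold IsRightComodHom
    rw [h1, LinearMap.rTensor_add, LinearMap.comp_add, LinearMap.add_comp,
      ha.2 i, hb.2 i]
  zero_mem' := by
    refine ⟨fun t => by simpa using zero_mem (finSupportSub (K := K) X), fun i => ?_⟩
    have h1 : LinearMap.proj (R := K) (φ := X) i ∘ₗ (0 : T →ₗ[K] ∀ i, X i) = 0 := by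
      simp
    unfold IsRightComodHom
    rw [h1]
    simp
  smul_mem' := by
    intro k a ha
    refine ⟨fun t => by simpa using Submodule.smul_mem (finSupportSub (K := K) X) k (ha.1 t), fun i => ?_⟩
    have h1 : LinearMap.proj (R := K) (φ := X) i ∘ₗ (k • a)
        = k • (LinearMap.proj i ∘ₗ a) := by
      simp [LinearMap.comp_smul]
    unfold IsRightComodHom
    rw [h1, LinearMap.rTensor_smul, LinearMap.comp_smul, LinearMap.smul_comp, ha.2 i]

variable (K C)

/-- Auxiliary: contracting a right smul with a functional gives convolution. -/
theorem aux_comp_smul_right (g h : Module.Dual K C) :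
    g ∘ₗ (Cright K C).smul h = conv K C g h := by
  have key : g ∘ₗ ((TensorProduct.rid K C).toLinearMap ∘ₗ h.lTensor C)
      = (TensorProduct.lid K K).toLinearMap ∘ₗ TensorProduct.map g h := by
    apply TensorProduct.ext'
    intro c c'
    simp [mul_comm]
  apply LinearMap.ext
  intro c
  have := LinearMap.congr_fun key (Coalgebra.comul (R := K) c)
  simpa [RightComodStr.smul, Cright, conv, LinearMap.comp_apply] using this

/-- Auxiliary: contracting a left smul with a functional gives convolution. -/
theorem aux_comp_smul_left (g h : Module.Dual K C) :
    h ∘ₗ (Cleft K C).smul g = conv K C g h := by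
  have key : h ∘ₗ ((TensorProduct.lid K C).toLinearMap ∘ₗ g.rTensor C)
      = (TensorProduct.lid K K).toLinearMap ∘ₗ TensorProduct.map g h := by
    apply TensorProduct.ext'
    intro c c'
    simp
  apply LinearMap.ext
  intro c
  have := LinearMap.congr_fun key (Coalgebra.comul (R := K) c)
  simpa [LeftComodStr.smul, Cleft, conv, LinearMap.comp_apply] using this

/-- Auxiliary: if all left contractions of a tensor land in a subspace `W`,
then the tensor lies in `C ⊗ W`. -/
theorem aux_contract_mem (W : Submodule K C) (t : C ⊗[K] C)
    (h : ∀ f : Module.Dual K C, TensorProduct.lid K C (f.rTensor C t) ∈ W) :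
    t ∈ LinearMap.range (W.subtype.lTensor C) := by
  classical
  set b := Module.Basis.ofVectorSpace K C with hb
  set ι := Module.Basis.ofVectorSpaceIndex K C with hι
  set e : C ⊗[K] C ≃ₗ[K] (ι →₀ C) :=
    (TensorProduct.congr b.repr (LinearEquiv.refl K C)).trans
      (TensorProduct.finsuppScalarLeft K C ι) with he
  have keyA : ∀ i : ι, e t i = TensorProduct.lid K C ((b.coord i).rTensor C t) := by
    intro i
    have hmap : Finsupp.lapply (M := C) (R := K) i ∘ₗ (e : C ⊗[K] C →ₗ[K] ι →₀ C)
        = (TensorProduct.lid K C).toLinearMap ∘ₗ (b.coord i).rTensor C := by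
      apply TensorProduct.ext'
      intro c c'
      simp [he, Module.Basis.coord_apply]
    exact LinearMap.congr_fun hmap t
  have hgi : ∀ i : ι, e t i ∈ W := by
    intro i
    rw [keyA i]
    exact h (b.coord i)
  refine ⟨∑ i ∈ (e t).support, b i ⊗ₜ[K] (⟨e t i, hgi i⟩ : W), ?_⟩
  rw [map_sum]
  have hterm : ∀ i ∈ (e t).support,
      (W.subtype.lTensor C) (b i ⊗ₜ[K] (⟨e t i, hgi i⟩ : W))
        = e.symm (Finsupp.single i (e t i)) := by
    intro i _
    simp [he]
  rw [Finset.sum_congr rfl hterm, ← map_sum]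
  have hsum : (∑ i ∈ (e t).support, Finsupp.single i (e t i)) = e t := by
    have := Finsupp.sum_single (e t)
    simpa [Finsupp.sum] using this
  rw [hsum, e.symm_apply_apply]

/-- Auxiliary: a subspace stable under the `C*`-action is a left subcomodule. -/
theorem aux_isSubcomod_of_stable (W : Submodule K C)
    (hW : ∀ f : Module.Dual K C, ∀ c ∈ W, (Cleft K C).smul f c ∈ W) :
    (Cleft K C).IsSubcomod W := by
  intro x hx
  apply aux_contract_mem
  intro f
  have := hW f x hx
  simpa [LeftComodStr.smul, Cleft, LinearMap.comp_apply] using this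

/-- Let `S` be a simple left subcomodule of `C` and `E = E(S) ⊆ C` an
injective envelope of `S` in the category of left `C`-comodules. Regard `E(S)* = Hom_K(E, K)`
as a left `C*`-module (dual of the right `C*`-module `E`). Then
`S^⊥ = {α ∈ E(S)* : α|_S = 0}` is the unique maximal `C*`-submodule of `E(S)*`, `S^⊥` is
superfluous (small) in `E(S)*`, and `E(S)*` is generated as a left `C*`-module by any single
element `φ ∉ S^⊥`. -/
theorem dual_of_injective_envelope_local
    (S E : Submodule K C)
    (hS : (Cleft K C).IsSimpleSubcomod S)
    (hEsub : (Cleft K C).IsSubcomod E)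
    (hE : (Cleft K C).IsInjEnvSubcomod S E) :
    ((Cleft K C).subDualModStr hEsub).IsStableSub ((S.comap E.subtype).dualAnnihilator) ∧
    (S.comap E.subtype).dualAnnihilator ≠ ⊤ ∧
    (∀ P : Submodule K (Module.Dual K ↥E),
      ((Cleft K C).subDualModStr hEsub).IsStableSub P → P ≠ ⊤ →
        P ≤ (S.comap E.subtype).dualAnnihilator) ∧
    (∀ P : Submodule K (Module.Dual K ↥E),
      ((Cleft K C).subDualModStr hEsub).IsStableSub P →
        (S.comap E.subtype).dualAnnihilator ⊔ P = ⊤ → P = ⊤) ∧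
    (∀ φ : Module.Dual K ↥E, φ ∉ (S.comap E.subtype).dualAnnihilator →
      ∀ P : Submodule K (Module.Dual K ↥E),
        ((Cleft K C).subDualModStr hEsub).IsStableSub P → φ ∈ P → P = ⊤) := by
  classical
  obtain ⟨hSsub, hSne, hSmin⟩ := hS
  obtain ⟨hSE, _hEinj, hEess⟩ := hE
  -- the action on the dual, pointwise
  have act_apply : ∀ (f : Module.Dual K C) (α : Module.Dual K ↥E) (m : ↥E),
      ((Cleft K C).subDualModStr hEsub).act f α m
        = α ((Cleft K C).subSmul hEsub f m) := fun _ _ _ => rfl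
  -- Claim 1 : stability of S^⊥
  have h1 : ((Cleft K C).subDualModStr hEsub).IsStableSub
      ((S.comap E.subtype).dualAnnihilator) := by
    intro f α hα
    rw [Submodule.mem_dualAnnihilator] at hα ⊢
    intro m hm
    rw [act_apply]
    apply hα
    rw [Submodule.mem_comap] at hm ⊢
    have : ((Cleft K C).subSmul hEsub f m : C) = (Cleft K C).smul f (m : C) :=
      (Cleft K C).subSmul_apply_coe hEsub f m
    simpa [this] using hSsub.smul_mem f hm
  -- Claim 2 : S^⊥ ≠ ⊤
  have h2 : (S.comap E.subtype).dualAnnihilator ≠ ⊤ := by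
    obtain ⟨s, hsS, hs0⟩ := Submodule.ne_bot_iff S |>.mp hSne
    intro htop
    have hsE : s ∈ E := hSE hsS
    have hall : ∀ α : Module.Dual K ↥E, α ⟨s, hsE⟩ = 0 := by
      intro α
      have : α ∈ (S.comap E.subtype).dualAnnihilator := htop ▸ Submodule.mem_top
      exact (Submodule.mem_dualAnnihilator α).mp this ⟨s, hsE⟩ (by simpa using hsS)
    have : (⟨s, hsE⟩ : ↥E) = 0 := (Module.forall_dual_apply_eq_zero_iff K _).mp hall
    exact hs0 (by simpa using congrArg Subtype.val this)
  -- the key generation lemma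
  have key : ∀ φ : Module.Dual K ↥E, φ ∉ (S.comap E.subtype).dualAnnihilator →
      ∀ α : Module.Dual K ↥E,
        ∃ f : Module.Dual K C, ((Cleft K C).subDualModStr hEsub).act f φ = α := by
    intro φ hφ α
    -- extend φ to a functional on C
    obtain ⟨r, hr⟩ := E.subtype.exists_leftInverse_of_injective E.ker_subtype
    set φt : Module.Dual K C := φ ∘ₗ r with hφt
    have hφt_restrict : ∀ m : ↥E, φt (m : C) = φ m := by
      intro m
      have := LinearMap.congr_fun hr m
      simp only [LinearMap.comp_apply, Submodule.coe_subtype, LinearMap.id_apply] at this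
      simp [hφt, this]
    set Θ : C →ₗ[K] C := (Cright K C).smul φt with hΘdef
    have idA : ∀ (g : Module.Dual K C) (c : C), g (Θ c) = conv K C g φt c := by
      intro g c
      exact LinearMap.congr_fun (aux_comp_smul_right K C g φt) c
    have idB : ∀ (g h : Module.Dual K C) (c : C),
        h ((Cleft K C).smul g c) = conv K C g h c := by
      intro g h c
      exact LinearMap.congr_fun (aux_comp_smul_left K C g h) c
    set W : Submodule K C := E ⊓ LinearMap.ker Θ with hWdef
    have hWstab : ∀ f : Module.Dual K C, ∀ c ∈ W, (Cleft K C).smul f c ∈ W := by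
      intro f c hc
      obtain ⟨hcE, hcK⟩ := hc
      have hcK' : Θ c = 0 := hcK
      refine ⟨hEsub.smul_mem f hcE, ?_⟩
      have : Θ ((Cleft K C).smul f c) = 0 := by
        rw [← Module.forall_dual_apply_eq_zero_iff K]
        intro g
        calc g (Θ ((Cleft K C).smul f c))
            = conv K C g φt ((Cleft K C).smul f c) := idA g _
          _ = conv K C f (conv K C g φt) c := idB f (conv K C g φt) c
          _ = conv K C (conv K C f g) φt c := by rw [conv_assoc]
          _ = (conv K C f g) (Θ c) := (idA (conv K C f g) c).symm
          _ = 0 := by rw [hcK']; simp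
      exact this
    have hWsub : (Cleft K C).IsSubcomod W := aux_isSubcomod_of_stable K C W hWstab
    -- S ⊓ W = ⊥
    have hScapW : S ⊓ W = ⊥ := by
      have hsubc : (Cleft K C).IsSubcomod (S ⊓ W) :=
        aux_isSubcomod_of_stable K C (S ⊓ W)
          (fun f c hc => ⟨hSsub.smul_mem f hc.1, hWstab f c hc.2⟩)
      rcases hSmin (S ⊓ W) hsubc inf_le_left with h | h
      · exact h
      · exfalso
        apply hφ
        rw [Submodule.mem_dualAnnihilator]
        intro m hm
        rw [Submodule.mem_comap] at hm
        have hmS : (m : C) ∈ S := by simpa using hm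
        have hmW : (m : C) ∈ W := inf_eq_left.mp h hmS
        have hΘ0 : Θ (m : C) = 0 := hmW.2
        have h0 : φt (m : C) = 0 := by
          have hh := idA (Coalgebra.counit (R := K)) (m : C)
          rw [hΘ0, map_zero, conv_counit_left] at hh
          exact hh.symm
        rw [← hφt_restrict m]
        exact h0
    -- W = ⊥ by essentiality
    have hW0 : W = ⊥ := by
      by_contra hne
      exact hEess W hWsub inf_le_left hne hScapW
    -- θ is injective
    set θ : ↥E →ₗ[K] C := Θ ∘ₗ E.subtype with hθdef
    have hθker : LinearMap.ker θ = ⊥ := by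
      apply LinearMap.ker_eq_bot'.mpr
      intro m hm
      have hmW : (m : C) ∈ W := ⟨m.2, by simpa [hθdef] using hm⟩
      rw [hW0] at hmW
      exact Subtype.ext (by simpa using hmW)
    obtain ⟨g, hg⟩ := θ.exists_leftInverse_of_injective hθker
    refine ⟨α ∘ₗ g, ?_⟩
    apply LinearMap.ext
    intro m
    rw [act_apply]
    have step1 : φ ((Cleft K C).subSmul hEsub (α ∘ₗ g) m)
        = φt ((Cleft K C).smul (α ∘ₗ g) (m : C)) := by
      rw [← (Cleft K C).subSmul_apply_coe hEsub (α ∘ₗ g) m, hφt_restrict]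
    have step2 : φt ((Cleft K C).smul (α ∘ₗ g) (m : C)) = (α ∘ₗ g) (Θ (m : C)) := by
      rw [idB (α ∘ₗ g) φt (m : C), ← idA (α ∘ₗ g) (m : C)]
    have step3 : (α ∘ₗ g) (Θ (m : C)) = α m := by
      have := LinearMap.congr_fun hg m
      simp only [LinearMap.comp_apply, LinearMap.id_apply] at this ⊢
      rw [show Θ (m : C) = θ m from rfl, this]
    rw [step1, step2, step3]
  -- Claim 5
  have h5 : ∀ φ : Module.Dual K ↥E, φ ∉ (S.comap E.subtype).dualAnnihilator →
      ∀ P : Submodule K (Module.Dual K ↥E),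
        ((Cleft K C).subDualModStr hEsub).IsStableSub P → φ ∈ P → P = ⊤ := by
    intro φ hφ P hP hφP
    rw [eq_top_iff]
    intro α _
    obtain ⟨f, hf⟩ := key φ hφ α
    rw [← hf]
    exact hP f φ hφP
  -- Claim 3
  have h3 : ∀ P : Submodule K (Module.Dual K ↥E),
      ((Cleft K C).subDualModStr hEsub).IsStableSub P → P ≠ ⊤ →
        P ≤ (S.comap E.subtype).dualAnnihilator := by
    intro P hP hPne φ hφP
    by_contra hφ
    exact hPne (h5 φ hφ P hP hφP)
  -- Claim 4
  have h4 : ∀ P : Submodule K (Module.Dual K ↥E),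
      ((Cleft K C).subDualModStr hEsub).IsStableSub P →
        (S.comap E.subtype).dualAnnihilator ⊔ P = ⊤ → P = ⊤ := by
    intro P hP hsup
    by_contra hPne
    have hle := h3 P hP hPne
    rw [sup_eq_left.mpr hle] at hsup
    exact h2 hsup
  exact ⟨h1, h2, h3, h4, h5⟩

end CoFrob
end

section
/- Let C be a coalgebra over a field K, S a simple left subcomodule of C, and E(S) ⊆ C an injective envelope of S in the category of left C-comodules. Then the dual E(S)* = Hom_K(E(S), K), regarded as a left C*-module (the dual of the right C*-module E(S)), is an indecomposable left C*-module. -/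
open TensorProduct LinearMap

namespace CoFrob

universe u v w x y

variable (K : Type u) [Field K] (C : Type v) [AddCommGroup C] [Module K C] [Coalgebra K C]

variable {K C}

variable (K C)

variable {K C}
variable {M : Type w} [AddCommGroup M] [Module K M]

/-! ### The regular comodule structures on `C` -/

variable (K C)

variable {K C}

/-! ### Modules over the dual algebra `C*` -/

variable (K C)

variable {K C}

/-! ### The regular `C*`-module structures on `C*`, and rational modules -/

variable (K C)

variable {K C}

/-! ### Co-Frobenius coalgebras -/

variable (K C)

variable {K C}

variable (K C)

/-! ### Auxiliary lemmas for Statement 5 -/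

theorem mem_range_lTensor_ker {A : Type v} {B : Type v} [AddCommGroup A] [AddCommGroup B]
    [Module K A] [Module K B] (j : A →ₗ[K] B) {u : C ⊗[K] A}
    (hu : (j.lTensor C) u = 0) :
    u ∈ LinearMap.range ((LinearMap.ker j).subtype.lTensor C) := by
  have hx := Module.Flat.lTensor_exact (R := K) C (LinearMap.exact_subtype_ker_map j)
  exact (hx u).mp hu

theorem isSubcomod_inf_ker {W : Type v} [AddCommGroup W] [Module K W]
    (s : Submodule K C) (hs : (Cleft K C).IsSubcomod s) (w : C →ₗ[K] W)
    (hw : ∀ x ∈ s ⊓ LinearMap.ker w, (w.lTensor C) (Coalgebra.comul (R := K) x) = 0) :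
    (Cleft K C).IsSubcomod (s ⊓ LinearMap.ker w) := by
  intro x hx
  obtain ⟨u, hu⟩ := hs x hx.1
  have hρ : (Cleft K C).ρ = Coalgebra.comul (R := K) := rfl
  rw [hρ] at hu
  have hup : ((w ∘ₗ s.subtype).lTensor C) u = 0 := by
    rw [LinearMap.lTensor_comp, LinearMap.comp_apply, hu]
    exact hw x hx
  obtain ⟨v, hv⟩ := mem_range_lTensor_ker K C (w ∘ₗ s.subtype) hup
  have hmem : ∀ y : ↥(LinearMap.ker (w ∘ₗ s.subtype)),
      (s.subtype ∘ₗ (LinearMap.ker (w ∘ₗ s.subtype)).subtype) y ∈ s ⊓ LinearMap.ker w := by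
    intro y
    refine ⟨(y : ↥s).2, ?_⟩
    have h2 := y.2
    simp only [LinearMap.mem_ker, LinearMap.comp_apply] at h2 ⊢
    exact h2
  refine ⟨((LinearMap.codRestrict (s ⊓ LinearMap.ker w)
      (s.subtype ∘ₗ (LinearMap.ker (w ∘ₗ s.subtype)).subtype) hmem).lTensor C) v, ?_⟩
  rw [hρ]
  have hfac : (s ⊓ LinearMap.ker w).subtype ∘ₗ LinearMap.codRestrict (s ⊓ LinearMap.ker w)
        (s.subtype ∘ₗ (LinearMap.ker (w ∘ₗ s.subtype)).subtype) hmem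
      = s.subtype ∘ₗ (LinearMap.ker (w ∘ₗ s.subtype)).subtype :=
    LinearMap.subtype_comp_codRestrict _ _ _
  rw [← LinearMap.comp_apply, ← LinearMap.lTensor_comp, hfac, LinearMap.lTensor_comp,
    LinearMap.comp_apply, hv, hu]

theorem stable_sub_eq_top (S E : Submodule K C)
    (hS : (Cleft K C).IsSimpleSubcomod S)
    (hEsub : (Cleft K C).IsSubcomod E)
    (hE : LeftComodStr.IsInjEnvSubcomod.{u, v, v, x} (Cleft K C) S E)
    (X : Submodule K (Module.Dual K ↥E))
    (hX : ((Cleft K C).subDualModStr hEsub).IsStableSub X)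
    (α : Module.Dual K ↥E) (hαX : α ∈ X)
    (x0 : ↥E) (hx0 : (x0 : C) ∈ S) (hα0 : α x0 ≠ 0) : X = ⊤ := by
  classical
  obtain ⟨ᾱ, hᾱ⟩ := LinearMap.exists_extend α
  set A0 : C ⊗[K] C →ₗ[K] C := (TensorProduct.rid K C).toLinearMap ∘ₗ ᾱ.lTensor C with hA0
  set θ : C →ₗ[K] C := A0 ∘ₗ Coalgebra.comul (R := K) with hθdef
  have hρ : (Cleft K C).ρ = Coalgebra.comul (R := K) := rfl
  -- counit identity : ε (θ c) = ᾱ c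
  have hcounit : ∀ c : C, Coalgebra.counit (R := K) (θ c) = ᾱ c := by
    intro c
    have hbil : (Coalgebra.counit (R := K) (A := C)) ∘ₗ A0
        = ᾱ ∘ₗ ((TensorProduct.lid K C).toLinearMap ∘ₗ
            (Coalgebra.counit (R := K) (A := C)).rTensor C) := by
      apply TensorProduct.ext'
      intro a b
      simp [hA0, mul_comm]
    have h1 := LinearMap.congr_fun hbil (Coalgebra.comul (R := K) c)
    have h2 := LinearMap.congr_fun (Cleft K C).counit' c
    rw [hρ] at h2
    simp only [LinearMap.comp_apply, LinearEquiv.coe_coe, LinearMap.id_apply] at h1 h2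
    rw [hθdef]
    simp only [LinearMap.comp_apply]
    rw [h1, h2]
  -- smul identity : ᾱ (f ⇀ c) = f (θ c)
  have hsmul : ∀ (f : Module.Dual K C) (c : C), ᾱ ((Cleft K C).smul f c) = f (θ c) := by
    intro f c
    have hbil : ᾱ ∘ₗ ((TensorProduct.lid K C).toLinearMap ∘ₗ f.rTensor C) = f ∘ₗ A0 := by
      apply TensorProduct.ext'
      intro a b
      simp [hA0, mul_comm]
    have h1 := LinearMap.congr_fun hbil (Coalgebra.comul (R := K) c)
    simp only [LinearMap.comp_apply, LinearEquiv.coe_coe] at h1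
    have hs : (Cleft K C).smul f c
        = (TensorProduct.lid K C) (f.rTensor C (Coalgebra.comul (R := K) c)) := rfl
    rw [hs, hθdef]
    simp only [LinearMap.comp_apply]
    exact h1
  -- θ is a comodule map (pointwise)
  have hcom : ∀ c : C, Coalgebra.comul (R := K) (θ c)
      = (θ.lTensor C) (Coalgebra.comul (R := K) c) := by
    intro c
    have N1 : (Coalgebra.comul (R := K) (A := C)) ∘ₗ A0
        = ((TensorProduct.rid K (C ⊗[K] C)).toLinearMap ∘ₗ ᾱ.lTensor (C ⊗[K] C)) ∘ₗ
            (Coalgebra.comul (R := K) (A := C)).rTensor C := by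
      apply TensorProduct.ext'
      intro a b
      simp [hA0]
    have N2 : (TensorProduct.rid K (C ⊗[K] C)).toLinearMap ∘ₗ ᾱ.lTensor (C ⊗[K] C)
        = (A0.lTensor C) ∘ₗ (TensorProduct.assoc K C C C).toLinearMap := by
      apply TensorProduct.ext_threefold
      intro a b c'
      simp [hA0]
    have e1 := LinearMap.congr_fun N1 (Coalgebra.comul (R := K) c)
    have e2 := LinearMap.congr_fun N2
      (((Coalgebra.comul (R := K) (A := C)).rTensor C) (Coalgebra.comul (R := K) c))
    have e3 := LinearMap.congr_fun (Coalgebra.coassoc (R := K) (A := C)) c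
    simp only [LinearMap.comp_apply, LinearEquiv.coe_coe] at e1 e2 e3
    calc Coalgebra.comul (R := K) (θ c)
        = (TensorProduct.rid K (C ⊗[K] C)) ((ᾱ.lTensor (C ⊗[K] C))
            (((Coalgebra.comul (R := K) (A := C)).rTensor C)
              (Coalgebra.comul (R := K) c))) := e1
      _ = (A0.lTensor C) ((TensorProduct.assoc K C C C)
            (((Coalgebra.comul (R := K) (A := C)).rTensor C)
              (Coalgebra.comul (R := K) c))) := e2
      _ = (A0.lTensor C) (((Coalgebra.comul (R := K) (A := C)).lTensor C)
            (Coalgebra.comul (R := K) c)) := by rw [e3]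
      _ = (θ.lTensor C) (Coalgebra.comul (R := K) c) := by
            have e4 := LinearMap.congr_fun
              (LinearMap.lTensor_comp C A0 (Coalgebra.comul (R := K) (A := C)))
              (Coalgebra.comul (R := K) c)
            rw [hθdef]
            exact e4.symm
  -- the kernel of θ on E is a subcomodule with trivial intersection with S
  have htsub : (Cleft K C).IsSubcomod (E ⊓ LinearMap.ker θ) := by
    apply isSubcomod_inf_ker K C E hEsub θ
    intro x hx
    rw [← hcom x, hx.2, map_zero]
  have huS : S ⊓ LinearMap.ker θ = ⊥ := by
    have hu : (Cleft K C).IsSubcomod (S ⊓ LinearMap.ker θ) := by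
      apply isSubcomod_inf_ker K C S hS.1 θ
      intro x hx
      rw [← hcom x, hx.2, map_zero]
    rcases hS.2.2 _ hu inf_le_left with h | h
    · exact h
    · exfalso
      have hle : S ≤ LinearMap.ker θ := inf_eq_left.mp h
      have hθ0 : θ (x0 : C) = 0 := hle hx0
      have : ᾱ (x0 : C) = 0 := by rw [← hcounit (x0 : C), hθ0, map_zero]
      have h4 := LinearMap.congr_fun hᾱ x0
      simp only [LinearMap.comp_apply, Submodule.coe_subtype] at h4
      rw [this] at h4
      exact hα0 h4.symm
  have htbot : E ⊓ LinearMap.ker θ = ⊥ := by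
    by_contra hne
    refine hE.2.2 (E ⊓ LinearMap.ker θ) htsub inf_le_left hne ?_
    rw [← inf_assoc, inf_eq_left.mpr hE.1]
    exact huS
  -- θ ∘ E.subtype is injective
  have hjinj : Function.Injective (θ ∘ₗ E.subtype) := by
    rw [← LinearMap.ker_eq_bot]
    rw [eq_bot_iff]
    intro x hx
    simp only [LinearMap.mem_ker, LinearMap.comp_apply, Submodule.coe_subtype] at hx
    have : (x : C) ∈ E ⊓ LinearMap.ker θ := ⟨x.2, hx⟩
    rw [htbot, Submodule.mem_bot] at this
    exact (Submodule.mem_bot K).mpr (Subtype.ext this)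
  -- every functional is in X
  rw [Submodule.eq_top_iff']
  intro β
  obtain ⟨f, hf⟩ : ∃ f : Module.Dual K C, f ∘ₗ (θ ∘ₗ E.subtype) = β := by
    obtain ⟨g, hg⟩ := LinearMap.exists_extend
      (β ∘ₗ ((LinearEquiv.ofInjective (θ ∘ₗ E.subtype) hjinj).symm :
        ↥(LinearMap.range (θ ∘ₗ E.subtype)) →ₗ[K] ↥E))
    refine ⟨g, ?_⟩
    ext x
    have h1 : (LinearMap.range (θ ∘ₗ E.subtype)).subtype
        ((LinearEquiv.ofInjective (θ ∘ₗ E.subtype) hjinj) x) = (θ ∘ₗ E.subtype) x := rfl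
    calc (g ∘ₗ (θ ∘ₗ E.subtype)) x
        = g ((LinearMap.range (θ ∘ₗ E.subtype)).subtype
            ((LinearEquiv.ofInjective (θ ∘ₗ E.subtype) hjinj) x)) := by
          rw [h1]; rfl
      _ = β ((LinearEquiv.ofInjective (θ ∘ₗ E.subtype) hjinj).symm
            ((LinearEquiv.ofInjective (θ ∘ₗ E.subtype) hjinj) x)) := LinearMap.congr_fun hg _
      _ = β x := by rw [LinearEquiv.symm_apply_apply]
  have hact : ((Cleft K C).subDualModStr hEsub).act f α = β := by
    ext x
    have h1 : (((Cleft K C).subDualModStr hEsub).act f α) x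
        = α ((Cleft K C).subSmul hEsub f x) := rfl
    rw [h1]
    have h2 := LinearMap.congr_fun hᾱ ((Cleft K C).subSmul hEsub f x)
    simp only [LinearMap.comp_apply, Submodule.coe_subtype] at h2
    rw [← h2, (Cleft K C).subSmul_apply_coe hEsub f x, hsmul f (x : C)]
    have h3 := LinearMap.congr_fun hf x
    simp only [LinearMap.comp_apply, Submodule.coe_subtype] at h3
    exact h3
  rw [← hact]
  exact hX f α hαX

/-- Let `S` be a simple left subcomodule of `C` and `E = E(S) ⊆ C` an
injective envelope of `S` in the category of left `C`-comodules. Then the dual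
`E(S)* = Hom_K(E, K)`, regarded as a left `C*`-module (the dual of the right `C*`-module
`E(S)`), is an indecomposable left `C*`-module. -/
theorem dual_of_injective_envelope_indecomposable
    (S E : Submodule K C)
    (hS : (Cleft K C).IsSimpleSubcomod S)
    (hEsub : (Cleft K C).IsSubcomod E)
    (hE : (Cleft K C).IsInjEnvSubcomod S E) :
    ((Cleft K C).subDualModStr hEsub).Indecomposable := by
  classical
  obtain ⟨sval, hsmem, hsne⟩ := (Submodule.ne_bot_iff S).mp hS.2.1
  have hsE : sval ∈ E := hE.1 hsmem
  refine ⟨?_, ?_⟩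
  · intro hbt
    have hall : ∀ φ : Module.Dual K ↥E, φ ⟨sval, hsE⟩ = 0 := by
      intro φ
      have hφ : φ ∈ (⊥ : Submodule K (Module.Dual K ↥E)) := by
        rw [hbt]; exact Submodule.mem_top
      rw [Submodule.mem_bot] at hφ
      rw [hφ]; rfl
    have hz := (Module.forall_dual_apply_eq_zero_iff K (⟨sval, hsE⟩ : ↥E)).mp hall
    exact hsne (congrArg Subtype.val hz)
  · rintro ⟨P, Q, hPst, hQst, hPQ, hsup, hP0, hQ0⟩
    have hPtop : P ≠ ⊤ := by rintro rfl; rw [top_inf_eq] at hPQ; exact hQ0 hPQ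
    have hQtop : Q ≠ ⊤ := by rintro rfl; rw [inf_top_eq] at hPQ; exact hP0 hPQ
    have hall : ∀ φ : Module.Dual K ↥E, φ ⟨sval, hsE⟩ = 0 := by
      intro φ
      have hφ : φ ∈ P ⊔ Q := by rw [hsup]; exact Submodule.mem_top
      obtain ⟨p, hp, q, hq, rfl⟩ := Submodule.mem_sup.mp hφ
      have hpz : p ⟨sval, hsE⟩ = 0 := by
        by_contra hne
        exact hPtop (stable_sub_eq_top K C S E hS hEsub hE P hPst p hp ⟨sval, hsE⟩ hsmem hne)
      have hqz : q ⟨sval, hsE⟩ = 0 := by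
        by_contra hne
        exact hQtop (stable_sub_eq_top K C S E hS hEsub hE Q hQst q hq ⟨sval, hsE⟩ hsmem hne)
      simp [LinearMap.add_apply, hpz, hqz]
    have hz := (Module.forall_dual_apply_eq_zero_iff K (⟨sval, hsE⟩ : ↥E)).mp hall
    exact hsne (congrArg Subtype.val hz)


end CoFrob
end

section
/- Let C be a co-Frobenius coalgebra over a field K. Then Rat(_{C*}C*), the largest rational submodule of C* regarded as a left module over itself, is dense in C* with respect to the finite topology on C* (the topology of pointwise convergence, i.e. the subspace topology induced from the product topology on K^C, with K discrete). -/
open TensorProduct LinearMap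

namespace CoFrob

universe u v w x y

variable (K : Type u) [Field K] (C : Type v) [AddCommGroup C] [Module K C] [Coalgebra K C]

variable {K C}

variable (K C)

variable {K C}
variable {M : Type w} [AddCommGroup M] [Module K M]

/-! ### The regular comodule structures on `C` -/

variable (K C)

variable {K C}

/-! ### Modules over the dual algebra `C*` -/

variable (K C)

variable {K C}

/-! ### The regular `C*`-module structures on `C*`, and rational modules -/

variable (K C)

variable {K C}

/-! ### Co-Frobenius coalgebras -/

variable (K C)

variable {K C}

set_option maxHeartbeats 1000000
set_option synthInstance.maxHeartbeats 400000

section DensityAux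

/-- `x ↼ g` expressed via the comultiplication. -/
theorem cright_smul_apply (g : Module.Dual K C) (x : C) :
    (Cright K C).smul g x
      = (TensorProduct.rid K C) (g.lTensor C (Coalgebra.comul (R := K) x)) := rfl

theorem cleft_smul_apply (f : Module.Dual K C) (x : C) :
    (Cleft K C).smul f x
      = (TensorProduct.lid K C) (f.rTensor C (Coalgebra.comul (R := K) x)) := rfl

theorem conv_apply'' (f g : Module.Dual K C) (x : C) :
    conv K C f g x
      = (TensorProduct.lid K K) (TensorProduct.map f g (Coalgebra.comul (R := K) x)) := rfl

/-- `(f * g)(x) = f (x ↼ g)`. -/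
theorem conv_apply_smul_right (f g : Module.Dual K C) (x : C) :
    conv K C f g x = f ((Cright K C).smul g x) := by
  have h : (TensorProduct.lid K K).toLinearMap ∘ₗ TensorProduct.map f g
      = f ∘ₗ ((TensorProduct.rid K C).toLinearMap ∘ₗ g.lTensor C) :=
    TensorProduct.ext' fun a b => by
      simp [mul_comm]
  have h2 := LinearMap.congr_fun h (Coalgebra.comul (R := K) x)
  simp only [LinearMap.comp_apply, LinearEquiv.coe_coe] at h2
  rw [conv_apply'', cright_smul_apply]
  exact h2

/-- `(f * g)(x) = g (f ⇀ x)`. -/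
theorem conv_apply_smul_left (f g : Module.Dual K C) (x : C) :
    conv K C f g x = g ((Cleft K C).smul f x) := by
  have h : (TensorProduct.lid K K).toLinearMap ∘ₗ TensorProduct.map f g
      = g ∘ₗ ((TensorProduct.lid K C).toLinearMap ∘ₗ f.rTensor C) :=
    TensorProduct.ext' fun a b => by
      simp
  have h2 := LinearMap.congr_fun h (Coalgebra.comul (R := K) x)
  simp only [LinearMap.comp_apply, LinearEquiv.coe_coe] at h2
  rw [conv_apply'', cleft_smul_apply]
  exact h2

/-- The transpose of a right co-Frobenius map turns `↼` into left convolution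
multiplication. -/
theorem flip_conv (ψ : C →ₗ[K] Module.Dual K C)
    (hψ : ∀ (f : Module.Dual K C) (c : C), ψ ((Cleft K C).smul f c) = conv K C (ψ c) f)
    (f : Module.Dual K C) (x : C) :
    conv K C f (ψ.flip x) = ψ.flip ((Cright K C).smul f x) := by
  apply LinearMap.ext
  intro a
  calc conv K C f (ψ.flip x) a
      = (ψ.flip x) ((Cleft K C).smul f a) := conv_apply_smul_left f (ψ.flip x) a
    _ = ψ ((Cleft K C).smul f a) x := rfl
    _ = conv K C (ψ a) f x := by rw [hψ]
    _ = (ψ a) ((Cright K C).smul f x) := conv_apply_smul_right (ψ a) f x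
    _ = ψ.flip ((Cright K C).smul f x) a := rfl

/-- Elements of `C ⊗ C` are separated by functionals applied in the second tensor factor. -/
theorem tensor_point_sep {u v : C ⊗[K] C}
    (h : ∀ f : Module.Dual K C,
      (TensorProduct.rid K C) (f.lTensor C u) = (TensorProduct.rid K C) (f.lTensor C v)) :
    u = v := by
  classical
  set bc := Module.Basis.ofVectorSpace K C with hbc
  set e1 := TensorProduct.congr (LinearEquiv.refl K C) bc.repr with he1
  apply e1.injective
  apply (TensorProduct.finsuppScalarRight K K C _).injective
  ext i
  rw [TensorProduct.finsuppScalarRight_apply, TensorProduct.finsuppScalarRight_apply]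
  have heq : (Finsupp.lapply i).lTensor C ∘ₗ (e1 : C ⊗[K] C →ₗ[K] _)
      = ((bc.coord i : Module.Dual K C)).lTensor C := by
    apply TensorProduct.ext'
    intro m c
    simp [he1, Module.Basis.coord_apply]
  have h2u := LinearMap.congr_fun heq u
  have h2v := LinearMap.congr_fun heq v
  simp only [LinearMap.comp_apply, LinearEquiv.coe_coe] at h2u h2v
  rw [h2u, h2v]
  exact h _

/-- Any finite-dimensional subspace of `C*` stable under left convolution
is a rational left `C*`-submodule. -/
theorem isRationalSub_of_finiteDimensional (W : Submodule K (Module.Dual K C))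
    (hfd : FiniteDimensional K ↥W)
    (hstab : ∀ (f g : Module.Dual K C), g ∈ W → conv K C f g ∈ W) :
    (dualLeftReg K C).IsRationalSub W := by
  classical
  haveI := hfd
  haveI hfree : Module.Free K ↥W := Module.Free.of_divisionRing K ↥W
  haveI hfin : Fintype (Module.Free.ChooseBasisIndex K ↥W) := inferInstance
  let b : Module.Basis (Module.Free.ChooseBasisIndex K ↥W) K ↥W := Module.Free.chooseBasis K ↥W
  -- find a "predual family" of points of `C` for the basis `b`
  have hy : ∃ y : Module.Free.ChooseBasisIndex K ↥W → C,
      ∀ i j, (b j : Module.Dual K C) (y i) = (if j = i then 1 else 0) := by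
    set P : C →ₗ[K] (Module.Free.ChooseBasisIndex K ↥W → K) :=
      LinearMap.pi (fun j => ((b j : Module.Dual K C))) with hP
    have hsurj : Function.Surjective P := by
      rw [← LinearMap.range_eq_top]
      by_contra hne
      obtain ⟨ξ, hξ0, hξ⟩ := Submodule.exists_dual_map_eq_bot_of_lt_top
          (lt_top_iff_ne_top.mpr hne) inferInstance
      set c : Module.Free.ChooseBasisIndex K ↥W → K :=
        fun j => ξ (fun t => if j = t then 1 else 0) with hc
      have hξeval : ∀ h : Module.Free.ChooseBasisIndex K ↥W → K, ξ h = ∑ j, h j * c j := by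
        intro h
        conv_lhs => rw [pi_eq_sum_univ h]
        rw [map_sum]
        refine Finset.sum_congr rfl fun j _ => ?_
        rw [map_smul, smul_eq_mul]
      have hcoe : (∑ j, c j • (b j : Module.Dual K C)) = 0 := by
        apply LinearMap.ext
        intro a
        have hm : ξ (P a) ∈ Submodule.map ξ (LinearMap.range P) :=
          Submodule.mem_map_of_mem ⟨a, rfl⟩
        rw [hξ] at hm
        have h0 : ξ (P a) = 0 := hm
        rw [hξeval] at h0
        have h1 : ∀ j, P a j = (b j : Module.Dual K C) a := fun j => rfl
        simp only [h1] at h0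
        simpa [mul_comm] using h0
      have hb0 : (∑ j, c j • b j : ↥W) = 0 := by
        have hcast : ((∑ j, c j • b j : ↥W) : Module.Dual K C)
            = ∑ j, c j • (b j : Module.Dual K C) := by
          simp
        exact Submodule.coe_eq_zero.mp (by rw [hcast, hcoe])
      have hc0 : ∀ j, c j = 0 := by
        intro j
        have h2 := congrArg (fun w => b.repr w j) hb0
        simpa [Finsupp.single_apply] using h2
      apply hξ0
      apply LinearMap.ext
      intro t
      rw [hξeval]
      simp [hc0]
    choose y hy' using fun i => hsurj (fun j => if j = i then 1 else 0)
    refine ⟨y, fun i j => ?_⟩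
    have := congrFun (hy' i) j
    exact this
  obtain ⟨y, hyδ⟩ := hy
  have hyrepr : ∀ (w : ↥W) i, (w : Module.Dual K C) (y i) = b.repr w i := by
    intro w i
    conv_lhs => rw [← b.sum_repr w]
    have hcast : ((∑ j, b.repr w j • b j : ↥W) : Module.Dual K C)
        = ∑ j, b.repr w j • (b j : Module.Dual K C) := by
      simp only [Submodule.coe_sum, Submodule.coe_smul]
    rw [hcast]
    rw [LinearMap.sum_apply]
    have : ∀ j, (b.repr w j • (b j : Module.Dual K C)) (y i)
        = b.repr w j * (if j = i then 1 else 0) := by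
      intro j
      rw [LinearMap.smul_apply, hyδ i j, smul_eq_mul]
    rw [Finset.sum_congr rfl fun j _ => this j]
    simp
  -- the "smul at a point" linear maps
  let T : C → (Module.Dual K C →ₗ[K] C) := fun x =>
    { toFun := fun f => (Cright K C).smul f x
      map_add' := fun f g => by
        have := LinearMap.congr_fun ((Cright K C).smul_add f g) x
        simpa using this
      map_smul' := fun k f => by
        have := LinearMap.congr_fun ((Cright K C).smul_smulK k f) x
        simpa using this }
  let cm : Module.Free.ChooseBasisIndex K ↥W → (↥W →ₗ[K] C) := fun i => (T (y i)) ∘ₗ W.subtype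
  let ρ : ↥W →ₗ[K] ↥W ⊗[K] C := ∑ i, (TensorProduct.mk K ↥W C (b i)) ∘ₗ (cm i)
  have hρ : ∀ p : ↥W, ρ p = ∑ i, (b i) ⊗ₜ[K] (cm i p) := fun p => by
    simp [ρ, LinearMap.sum_apply]
  have hcm : ∀ (f : Module.Dual K C) (p : ↥W) (i : _), f (cm i p) = conv K C f ↑p (y i) := by
    intro f p i
    rw [conv_apply_smul_right]
    rfl
  have hP0 : ∀ (f : Module.Dual K C) (p : ↥W),
      (∑ i, f (cm i p) • b i) = (⟨conv K C f ↑p, hstab f ↑p p.2⟩ : ↥W) := by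
    intro f p
    have hco : ∀ i, f (cm i p) = b.repr (⟨conv K C f ↑p, hstab f ↑p p.2⟩ : ↥W) i := by
      intro i
      rw [hcm]
      exact hyrepr (⟨conv K C f ↑p, hstab f ↑p p.2⟩ : ↥W) i
    calc (∑ i, f (cm i p) • b i)
        = ∑ i, b.repr (⟨conv K C f ↑p, hstab f ↑p p.2⟩ : ↥W) i • b i :=
          Finset.sum_congr rfl fun i _ => by rw [hco i]
      _ = _ := b.sum_repr _
  have hsm : ∀ (f : Module.Dual K C) (p : ↥W),
      (TensorProduct.rid K ↥W) (f.lTensor ↥W (ρ p)) = ∑ i, f (cm i p) • b i := by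
    intro f p
    rw [hρ, map_sum, map_sum]
    refine Finset.sum_congr rfl fun i _ => ?_
    rw [LinearMap.lTensor_tmul, TensorProduct.rid_tmul]
  refine ⟨fun f n hn => hstab f n hn, ?_⟩
  refine ⟨{ ρ := ρ, coassoc := ?_, counit' := ?_ }, ?_⟩
  · -- coassociativity
    apply LinearMap.ext
    intro p
    simp only [LinearMap.comp_apply, LinearEquiv.coe_coe]
    rw [hρ p, map_sum, map_sum, map_sum]
    have hL : ∀ i, (TensorProduct.assoc K ↥W C C) ((ρ.rTensor C) ((b i) ⊗ₜ[K] (cm i p)))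
        = ∑ k, (b k) ⊗ₜ[K] ((cm k (b i)) ⊗ₜ[K] (cm i p)) := by
      intro i
      rw [LinearMap.rTensor_tmul, hρ (b i), TensorProduct.sum_tmul, map_sum]
      refine Finset.sum_congr rfl fun k _ => ?_
      rw [TensorProduct.assoc_tmul]
    have hR : ∀ i, (Coalgebra.comul (R := K)).lTensor ↥W ((b i) ⊗ₜ[K] (cm i p))
        = (b i) ⊗ₜ[K] (Coalgebra.comul (R := K) (cm i p)) := fun i =>
      LinearMap.lTensor_tmul _ _ _ _
    calc (∑ i, (TensorProduct.assoc K ↥W C C) ((ρ.rTensor C) ((b i) ⊗ₜ[K] (cm i p))))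
        = ∑ i, ∑ k, (b k) ⊗ₜ[K] ((cm k (b i)) ⊗ₜ[K] (cm i p)) :=
          Finset.sum_congr rfl fun i _ => hL i
      _ = ∑ k, ∑ i, (b k) ⊗ₜ[K] ((cm k (b i)) ⊗ₜ[K] (cm i p)) := Finset.sum_comm
      _ = ∑ k, (b k) ⊗ₜ[K] (∑ i, (cm k (b i)) ⊗ₜ[K] (cm i p)) :=
          Finset.sum_congr rfl fun k _ => (TensorProduct.tmul_sum _ _ _).symm
      _ = ∑ k, (b k) ⊗ₜ[K] (Coalgebra.comul (R := K) (cm k p)) := ?_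
      _ = ∑ i, (Coalgebra.comul (R := K)).lTensor ↥W ((b i) ⊗ₜ[K] (cm i p)) :=
          (Finset.sum_congr rfl fun i _ => (hR i).symm)
    refine Finset.sum_congr rfl fun k _ => ?_
    congr 1
    -- the comodule identity on components
    apply tensor_point_sep
    intro f
    have hfL : (TensorProduct.rid K C) (f.lTensor C (∑ i, (cm k (b i)) ⊗ₜ[K] (cm i p)))
        = cm k (∑ i, f (cm i p) • b i) := by
      rw [map_sum, map_sum, map_sum]
      refine Finset.sum_congr rfl fun i _ => ?_
      rw [LinearMap.lTensor_tmul, TensorProduct.rid_tmul, map_smul]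
    rw [hfL, hP0]
    have hck : cm k (⟨conv K C f ↑p, hstab f ↑p p.2⟩ : ↥W)
        = (Cright K C).smul f (cm k p) := by
      show (Cright K C).smul (conv K C f ↑p) (y k) = (Cright K C).smul f (cm k p)
      have := LinearMap.congr_fun ((Cright K C).smul_conv f ↑p) (y k)
      exact this
    rw [hck, cright_smul_apply]
  · -- counit
    apply LinearMap.ext
    intro p
    simp only [LinearMap.comp_apply, LinearEquiv.coe_coe, LinearMap.id_apply]
    rw [hsm (Coalgebra.counit (R := K)) p, hP0]
    exact Subtype.ext (conv_counit_left (↑p : Module.Dual K C))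
  · -- the action matches
    intro f p
    show ((((TensorProduct.rid K ↥W) (f.lTensor ↥W (ρ p))) : ↥W) : Module.Dual K C)
        = (dualLeftReg K C).act f ↑p
    rw [hsm f p, hP0 f p]
    rfl

/-- For a right co-Frobenius map `ψ`, each transpose functional `ψ.flip x` is rational. -/
theorem flip_mem_rat (ψ : C →ₗ[K] Module.Dual K C)
    (hψ : ∀ (f : Module.Dual K C) (c : C), ψ ((Cleft K C).smul f c) = conv K C (ψ c) f)
    (x : C) : ψ.flip x ∈ (dualLeftReg K C).rat := by
  classical
  obtain ⟨s, hs⟩ := TensorProduct.exists_finset (Coalgebra.comul (R := K) x)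
  let T : Module.Dual K C →ₗ[K] C :=
    { toFun := fun f => (Cright K C).smul f x
      map_add' := fun f g => by
        have := LinearMap.congr_fun ((Cright K C).smul_add f g) x
        simpa using this
      map_smul' := fun k f => by
        have := LinearMap.congr_fun ((Cright K C).smul_smulK k f) x
        simpa using this }
  have hTval : ∀ f, T f = ∑ p ∈ s, f p.2 • p.1 := by
    intro f
    show (Cright K C).smul f x = _
    rw [cright_smul_apply, hs, map_sum, map_sum]
    refine Finset.sum_congr rfl fun p _ => ?_
    rw [LinearMap.lTensor_tmul, TensorProduct.rid_tmul]
  have hle : LinearMap.range T ≤ Submodule.span K ↑(s.image Prod.fst) := by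
    rintro v ⟨f, rfl⟩
    rw [hTval]
    exact Submodule.sum_mem _ fun p hp => Submodule.smul_mem _ _
      (Submodule.subset_span (Finset.mem_coe.mpr (Finset.mem_image_of_mem _ hp)))
  haveI h1 : FiniteDimensional K ↥(Submodule.span K (↑(s.image Prod.fst) : Set C)) :=
    FiniteDimensional.span_of_finite K (Finset.finite_toSet _)
  haveI h2 : FiniteDimensional K ↥(LinearMap.range T) :=
    Submodule.finiteDimensional_of_le hle
  have hWfd : FiniteDimensional K ↥((LinearMap.range T).map ψ.flip) :=
    Module.Finite.map _ _
  have hstabW : ∀ (f g : Module.Dual K C), g ∈ (LinearMap.range T).map ψ.flip →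
      conv K C f g ∈ (LinearMap.range T).map ψ.flip := by
    rintro f g ⟨v, ⟨g0, rfl⟩, rfl⟩
    rw [flip_conv ψ hψ]
    refine ⟨(Cright K C).smul f (T g0), ⟨conv K C f g0, ?_⟩, rfl⟩
    show (Cright K C).smul (conv K C f g0) x = _
    have := LinearMap.congr_fun ((Cright K C).smul_conv f g0) x
    exact this
  have hWrat := isRationalSub_of_finiteDimensional ((LinearMap.range T).map ψ.flip) hWfd hstabW
  have hle2 : (LinearMap.range T).map ψ.flip ≤ (dualLeftReg K C).rat := le_sSup hWrat
  apply hle2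
  refine ⟨x, ⟨Coalgebra.counit (R := K), ?_⟩, rfl⟩
  show (Cright K C).smul (Coalgebra.counit (R := K)) x = x
  have := LinearMap.congr_fun (Cright K C).smul_counit x
  simpa using this

end DensityAux

variable (K C)

/-- If `C` is a co-Frobenius coalgebra, then `Rat(C*)` (the largest
rational submodule of `C*` as a left module over itself) is dense in `C*` in the finite
topology, i.e. the topology induced from the product topology on `K^C` with `K` discrete. -/
theorem coFrobenius_rat_dense_in_finite_topology
    (h : IsCoFrobenius K C) :
    @Dense (Module.Dual K C)
      (TopologicalSpace.induced (fun φ : Module.Dual K C => (φ : C → K))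
        (@Pi.topologicalSpace C (fun _ => K) (fun _ => ⊥)))
      (((dualLeftReg K C).rat : Submodule K (Module.Dual K C)) : Set (Module.Dual K C)) := by
  classical
  obtain ⟨-, ψ, hψinj, hψ⟩ := h
  -- the rational part separates the points of `C`
  have hker : ∀ a : C, (∀ g ∈ (dualLeftReg K C).rat, g a = 0) → a = 0 := by
    intro a ha
    have hz : ψ a = 0 := by
      apply LinearMap.ext
      intro x
      have := ha _ (flip_mem_rat ψ hψ x)
      simpa using this
    have : ψ a = ψ 0 := by rw [hz, map_zero]
    exact hψinj this
  -- interpolation on finite sets from separation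
  have interp : ∀ (φ₀ : Module.Dual K C) (I : Finset C),
      ∃ g ∈ (dualLeftReg K C).rat, ∀ a ∈ I, g a = φ₀ a := by
    intro φ₀ I
    set E : Module.Dual K C →ₗ[K] ((↑I : Type v) → K) :=
      LinearMap.pi (fun a : ↑I => LinearMap.applyₗ (a : C)) with hE
    have hEapp : ∀ (g : Module.Dual K C) (a : ↑I), E g a = g ↑a := fun g a => rfl
    by_cases hmem : E φ₀ ∈ ((dualLeftReg K C).rat).map E
    · obtain ⟨g, hg, hEg⟩ := hmem
      refine ⟨g, hg, fun a ha => ?_⟩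
      have h2 := congrFun hEg (⟨a, ha⟩ : ↑I)
      simpa [hEapp] using h2
    · exfalso
      obtain ⟨ξ, hξφ, hξ⟩ := Submodule.exists_dual_map_eq_bot_of_notMem hmem
          inferInstance
      set c : ↑I → K := fun a => ξ (fun t => if a = t then 1 else 0) with hc
      have hξeval : ∀ hh : ↑I → K, ξ hh = ∑ a, hh a * c a := by
        intro hh
        conv_lhs => rw [pi_eq_sum_univ hh]
        rw [map_sum]
        refine Finset.sum_congr rfl fun a _ => ?_
        rw [map_smul, smul_eq_mul]
      set z : C := ∑ a : ↑I, c a • (a : C) with hz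
      have hz0 : z = 0 := by
        apply hker
        intro g hg
        have h0 : ξ (E g) = 0 := by
          have hm : ξ (E g) ∈ Submodule.map ξ (((dualLeftReg K C).rat).map E) :=
            Submodule.mem_map_of_mem (Submodule.mem_map_of_mem hg)
          rw [hξ] at hm
          exact hm
        rw [hξeval] at h0
        rw [hz, map_sum]
        rw [← h0]
        refine Finset.sum_congr rfl fun a _ => ?_
        rw [map_smul, smul_eq_mul, hEapp, mul_comm]
      apply hξφ
      have : ξ (E φ₀) = φ₀ z := by
        rw [hξeval, hz, map_sum]
        refine Finset.sum_congr rfl fun a _ => ?_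
        rw [map_smul, smul_eq_mul, hEapp, mul_comm]
      rw [this, hz0, map_zero]
  -- unfold density in the induced topology
  letI : TopologicalSpace K := ⊥
  letI tD : TopologicalSpace (Module.Dual K C) :=
    TopologicalSpace.induced (fun φ : Module.Dual K C => (φ : C → K)) Pi.topologicalSpace
  show Dense _
  rw [dense_iff_inter_open]
  rintro U hU ⟨φ₀, hφ₀⟩
  obtain ⟨U', hU', rfl⟩ := isOpen_induced_iff.mp hU
  obtain ⟨I, w, hIw, hsub⟩ := isOpen_pi_iff.mp hU' _ hφ₀
  obtain ⟨g, hg, hga⟩ := interp φ₀ I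
  refine ⟨g, ?_, hg⟩
  apply hsub
  intro a ha
  have haI : a ∈ I := ha
  show (g : C → K) a ∈ w a
  rw [hga a haI]
  exact (hIw a haI).2


end CoFrob
end
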